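/- arXiv:1903.07496 — 7 statements merged into one kernel-verified Lean document; each statement's English description precedes it below -/
import Mathlib

section
/- GNS construction (existence). Let 𝔄 be a unital *-algebra and ω : 𝔄 → ℂ a positive linear functional with ω(1) ≠ 0. Then there exists a GNS quadruple for (𝔄, ω): a complex Hilbert space H, a subspace D ⊆ H dense in H, a unital ℂ-algebra homomorphism π from 𝔄 into the linear endomorphisms of D satisfying ⟪π(a*)x, y⟫ = ⟪x, π(a)y⟫ for all a ∈ 𝔄 and x, y ∈ D, and a vector ψ ∈ D such that D = {π(b)ψ : b ∈ 𝔄} and ω(a) = ⟪ψ, π(a)ψ⟫ for all a ∈ 𝔄; in particular ‖ψ‖² = ω(1). -/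
/-!
The form `⟪x, y⟫ = ω (x⋆ y)` is positive semidefinite, hence Hermitian by polarization, so it makes
`𝔄` a pre-Hilbert space; its completion is `H`. By Cauchy–Schwarz the null vectors `ω (x⋆ x) = 0`
form a left ideal, so left multiplication descends to the (dense) image `D` of `𝔄` in `H`. The
cyclic vector `ψ` is the image of `1`, and `⟪ψ, π a ψ⟫ = ω (1⋆ a 1) = ω a`.
-/

open scoped ComplexOrder InnerProductSpace

universe u

namespace GNS

section Representation

variable {R A M : Type*} [CommRing R] [Ring A] [Algebra R A] [AddCommGroup M] [Module R M]
  (ι : A →ₗ[R] M) (hι : ∀ (a : A) {x : A}, ι x = 0 → ι (a * x) = 0)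

def kerLeftIdeal : Submodule A A where
  __ := LinearMap.ker ι
  smul_mem' a _ hx := hι a hx

noncomputable def quotKerLeftIdealEquivRange : (A ⧸ kerLeftIdeal ι hι) ≃ₗ[R] LinearMap.range ι :=
  (Submodule.Quotient.restrictScalarsEquiv R (kerLeftIdeal ι hι)).symm ≪≫ₗ ι.quotKerEquivRange

noncomputable def rangeRepresentation : A →ₐ[R] Module.End R (LinearMap.range ι) :=
  ((quotKerLeftIdealEquivRange ι hι).conjAlgEquiv R).toAlgHom.comp
    (Algebra.lsmul R R (A ⧸ kerLeftIdeal ι hι))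

theorem quotKerLeftIdealEquivRange_mk (x : A) :
    quotKerLeftIdealEquivRange ι hι (Submodule.Quotient.mk x) = ι.rangeRestrict x :=
  rfl

theorem rangeRepresentation_apply_rangeRestrict (a x : A) :
    rangeRepresentation ι hι a (ι.rangeRestrict x) = ι.rangeRestrict (a * x) := by
  rw [← quotKerLeftIdealEquivRange_mk ι hι, ← quotKerLeftIdealEquivRange_mk ι hι]
  show quotKerLeftIdealEquivRange ι hι (a • (quotKerLeftIdealEquivRange ι hι).symm _) = _
  rw [LinearEquiv.symm_apply_apply]
  rfl

end Representation

section PositiveFunctional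

variable {A : Type*} [NonUnitalRing A] [StarRing A] [Module ℂ A] {ω : A →ₗ[ℂ] ℂ}
  (hpos : ∀ a : A, 0 ≤ ω (star a * a))
include hpos

theorem im_map_star_mul_add_map_star_mul (x y : A) :
    (ω (star x * y) + ω (star y * x)).im = 0 := by
  have h := (Complex.nonneg_iff.1 (hpos (x + y))).2
  simp only [star_add, add_mul, mul_add, map_add, Complex.add_im,
    ← (Complex.nonneg_iff.1 (hpos x)).2, ← (Complex.nonneg_iff.1 (hpos y)).2] at h
  rw [Complex.add_im]
  linarith

variable [StarModule ℂ A] [IsScalarTower ℂ A A] [SMulCommClass ℂ A A]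

theorem conj_map_star_mul (x y : A) : starRingEnd ℂ (ω (star y * x)) = ω (star x * y) := by
  have him := im_map_star_mul_add_map_star_mul hpos x y
  -- with `I • x` in place of `x`, the vanishing imaginary part becomes an equality of real parts
  have hre := im_map_star_mul_add_map_star_mul hpos (Complex.I • x) y
  rw [star_smul, smul_mul_assoc, mul_smul_comm, map_smul, map_smul, smul_eq_mul, smul_eq_mul,
    Complex.star_def, Complex.conj_I] at hre
  simp only [Complex.add_im, Complex.mul_im, Complex.neg_re, Complex.neg_im, Complex.I_re,
    Complex.I_im] at him hre
  apply Complex.ext <;> simp only [Complex.conj_re, Complex.conj_im] <;> linarith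

end PositiveFunctional

section PreGNS

variable {A : Type*} [NonUnitalRing A] [StarRing A] [Module ℂ A] [StarModule ℂ A]
  [IsScalarTower ℂ A A] [SMulCommClass ℂ A A]

-- `hpos` is a parameter only so that the inner product space instances below can use it.
def PreGNS (ω : A →ₗ[ℂ] ℂ) (_hpos : ∀ a : A, 0 ≤ ω (star a * a)) : Type _ := A

variable {ω : A →ₗ[ℂ] ℂ} (hpos : ∀ a : A, 0 ≤ ω (star a * a))

instance : AddCommGroup (PreGNS ω hpos) := inferInstanceAs (AddCommGroup A)

instance : Module ℂ (PreGNS ω hpos) := inferInstanceAs (Module ℂ A)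

def toPreGNS : A ≃ₗ[ℂ] PreGNS ω hpos := LinearEquiv.refl ℂ A

noncomputable abbrev preInnerProductCore : PreInnerProductSpace.Core ℂ (PreGNS ω hpos) where
  inner x y := ω (star ((toPreGNS hpos).symm x) * (toPreGNS hpos).symm y)
  conj_inner_symm x y := conj_map_star_mul hpos _ _
  re_inner_nonneg x := (Complex.nonneg_iff.1 (hpos _)).1
  add_left x y z := by simp only [map_add, star_add, add_mul]
  smul_left x y c := by
    simp only [map_smul, star_smul, smul_mul_assoc, smul_eq_mul, Complex.star_def]

noncomputable instance : SeminormedAddCommGroup (PreGNS ω hpos) :=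
  InnerProductSpace.Core.toSeminormedAddCommGroup (c := preInnerProductCore hpos)

noncomputable instance : InnerProductSpace ℂ (PreGNS ω hpos) :=
  InnerProductSpace.ofCore (preInnerProductCore hpos)

theorem inner_toPreGNS (x y : A) :
    ⟪toPreGNS hpos x, toPreGNS hpos y⟫_ℂ = ω (star x * y) :=
  rfl

theorem norm_toPreGNS_mul_eq_zero (a : A) {x : A} (hx : ‖toPreGNS hpos x‖ = 0) :
    ‖toPreGNS hpos (a * x)‖ = 0 := by
  have h : ⟪toPreGNS hpos (a * x), toPreGNS hpos (a * x)⟫_ℂ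
      = ⟪toPreGNS hpos x, toPreGNS hpos (star a * (a * x))⟫_ℂ := by
    rw [inner_toPreGNS, inner_toPreGNS, star_mul, mul_assoc]
  have hcs := norm_inner_le_norm (𝕜 := ℂ) (toPreGNS hpos x) (toPreGNS hpos (star a * (a * x)))
  rw [hx, zero_mul, norm_le_zero_iff, ← h, inner_self_eq_norm_sq_to_K, sq_eq_zero_iff] at hcs
  exact RCLike.ofReal_eq_zero.mp hcs

abbrev GNSSpace := UniformSpace.Completion (PreGNS ω hpos)

noncomputable def toGNSSpace : A →ₗ[ℂ] GNSSpace hpos :=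
  UniformSpace.Completion.toComplₗᵢ.toLinearMap ∘ₗ (toPreGNS hpos).toLinearMap

theorem inner_toGNSSpace (x y : A) :
    ⟪toGNSSpace hpos x, toGNSSpace hpos y⟫_ℂ = ω (star x * y) :=
  UniformSpace.Completion.inner_coe _ _

theorem denseRange_toGNSSpace : DenseRange (toGNSSpace hpos) :=
  UniformSpace.Completion.denseRange_coe (α := PreGNS ω hpos)

theorem toGNSSpace_mul_eq_zero (a : A) {x : A} (hx : toGNSSpace hpos x = 0) :
    toGNSSpace hpos (a * x) = 0 := by
  rw [← norm_eq_zero] at hx ⊢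
  exact (UniformSpace.Completion.norm_coe _).trans
    (norm_toPreGNS_mul_eq_zero hpos a ((UniformSpace.Completion.norm_coe _).symm.trans hx))

end PreGNS
end GNS

theorem gns_existence_general {A : Type u} [Ring A] [Algebra ℂ A] [StarRing A] [StarModule ℂ A]
    (ω : A →ₗ[ℂ] ℂ) (hpos : ∀ a : A, 0 ≤ ω (star a * a)) :
    ∃ (H : Type u) (_ : NormedAddCommGroup H) (_ : InnerProductSpace ℂ H) (_ : CompleteSpace H)
      (D : Submodule ℂ H) (π : A →ₐ[ℂ] Module.End ℂ D) (ψ : D),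
      Dense (D : Set H) ∧
      (∀ (a : A) (x y : D),
        (inner ℂ (((π (star a)) x : D) : H) ((y : D) : H) : ℂ)
          = inner ℂ ((x : D) : H) (((π a) y : D) : H)) ∧
      (∀ x : D, ∃ b : A, (π b) ψ = x) ∧
      (∀ a : A, ω a = inner ℂ ((ψ : D) : H) (((π a) ψ : D) : H)) ∧
      (‖(ψ : H)‖ : ℂ) ^ 2 = ω 1 := by
  set ι := GNS.toGNSSpace hpos
  have hinner : ∀ x y, ⟪ι x, ι y⟫_ℂ = ω (star x * y) := GNS.inner_toGNSSpace hpos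
  set π := GNS.rangeRepresentation ι (GNS.toGNSSpace_mul_eq_zero hpos)
  have hπ : ∀ a x, π a (ι.rangeRestrict x) = ι.rangeRestrict (a * x) :=
    GNS.rangeRepresentation_apply_rangeRestrict _ _
  refine ⟨_, inferInstance, inferInstance, inferInstance, LinearMap.range ι, π,
    ι.rangeRestrict 1, ?_, ?_, ?_, ?_, ?_⟩
  · rw [LinearMap.coe_range]
    exact GNS.denseRange_toGNSSpace hpos
  · intro a x y
    obtain ⟨u, rfl⟩ := ι.surjective_rangeRestrict x
    obtain ⟨v, rfl⟩ := ι.surjective_rangeRestrict y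
    simp only [hπ, LinearMap.codRestrict_apply, hinner, star_mul, star_star, mul_assoc]
  · intro x
    obtain ⟨b, rfl⟩ := ι.surjective_rangeRestrict x
    exact ⟨b, by rw [hπ, mul_one]⟩
  · intro a
    rw [hπ, mul_one, LinearMap.codRestrict_apply, LinearMap.codRestrict_apply, hinner, star_one,
      one_mul]
  · rw [← RCLike.ofReal_eq_complex_ofReal, ← inner_self_eq_norm_sq_to_K,
      LinearMap.codRestrict_apply, hinner, star_one, one_mul]

/-- **GNS construction (existence).**
If `𝔄` is a unital *-algebra and `ω : 𝔄 → ℂ` a positive linear functional with `ω 1 ≠ 0`,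
then there exists a GNS quadruple `(H, D, π, ψ)` for `(𝔄, ω)`. -/
theorem gns_existence {A : Type u} [Ring A] [Algebra ℂ A] [StarRing A] [StarModule ℂ A]
    (ω : A →ₗ[ℂ] ℂ) (hpos : ∀ a : A, 0 ≤ ω (star a * a)) (hone : ω 1 ≠ 0) :
    ∃ (H : Type u) (_ : NormedAddCommGroup H) (_ : InnerProductSpace ℂ H) (_ : CompleteSpace H)
      (D : Submodule ℂ H) (π : A →ₐ[ℂ] Module.End ℂ D) (ψ : D),
      Dense (D : Set H) ∧
      (∀ (a : A) (x y : D),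
        (inner ℂ (((π (star a)) x : D) : H) ((y : D) : H) : ℂ)
          = inner ℂ ((x : D) : H) (((π a) y : D) : H)) ∧
      (∀ x : D, ∃ b : A, (π b) ψ = x) ∧
      (∀ a : A, ω a = inner ℂ ((ψ : D) : H) (((π a) ψ : D) : H)) ∧
      (‖(ψ : H)‖ : ℂ) ^ 2 = ω 1 :=
  gns_existence_general ω hpos
end

section
/- GNS construction (uniqueness). Let 𝔄 be a unital *-algebra and ω : 𝔄 → ℂ a positive linear functional with ω(1) ≠ 0. If (H, D, π, ψ) and (H', D', π', ψ') are two GNS quadruples for (𝔄, ω), then there exists a surjective linear isometry U : H → H' such that U(D) = D', Uψ = ψ', and π'(a)(Ux) = U(π(a)x) for every a ∈ 𝔄 and every x ∈ D. -/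
/-!
Since `⟪π b ψ, π c ψ⟫ = ω (b* c) = ⟪π' b ψ', π' c ψ'⟫`, the assignment `π b ψ ↦ π' b ψ'` is a
well-defined isometric linear bijection `D ≃ D'`, and it intertwines `π` and `π'` because
`π a (π b ψ) = π (a b) ψ`. Being isometric between dense subspaces of Hilbert spaces, it extends
to a unitary `H ≃ H'`.
-/

open scoped ComplexOrder

/-- `(H, D, π, ψ)` is a GNS quadruple for `(𝔄, ω)`:  `D` is dense in `H`, `π` is a unital
`ℂ`-algebra representation of `𝔄` on `D` with `⟪π(a*)x, y⟫ = ⟪x, π(a)y⟫`, `ψ` is cyclic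
(`D = π(𝔄)ψ`) and `ω a = ⟪ψ, π(a)ψ⟫`. -/
def IsGNSQuadruple {A : Type*} [Ring A] [Algebra ℂ A] [StarRing A] [StarModule ℂ A]
    (ω : A →ₗ[ℂ] ℂ)
    {H : Type*} [NormedAddCommGroup H] [InnerProductSpace ℂ H] [CompleteSpace H]
    (D : Submodule ℂ H) (π : A →ₐ[ℂ] Module.End ℂ D) (ψ : D) : Prop :=
  Dense (D : Set H) ∧
  (∀ (a : A) (x y : D),
    (inner ℂ (((π (star a)) x : D) : H) ((y : D) : H) : ℂ)
      = inner ℂ ((x : D) : H) (((π a) y : D) : H)) ∧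
  (∀ x : D, ∃ b : A, (π b) ψ = x) ∧
  (∀ a : A, ω a = inner ℂ ((ψ : D) : H) (((π a) ψ : D) : H))

open LinearMap

theorem LinearMap.ker_eq_ker_of_norm_eq {R M E F : Type*} [Ring R] [AddCommGroup M] [Module R M]
    [NormedAddCommGroup E] [Module R E] [NormedAddCommGroup F] [Module R F]
    {p : M →ₗ[R] E} {q : M →ₗ[R] F} (h : ∀ x, ‖p x‖ = ‖q x‖) : ker p = ker q := by
  ext x
  rw [mem_ker, mem_ker, ← norm_eq_zero, h, norm_eq_zero]

section OfSurjective

variable {R M N P : Type*} [Ring R] [AddCommGroup M] [Module R M] [AddCommGroup N] [Module R N]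
  [AddCommGroup P] [Module R P] (p : M →ₗ[R] N) (q : M →ₗ[R] P)
  (hp : Function.Surjective p) (hq : Function.Surjective q) (h : ker p = ker q)

noncomputable def LinearEquiv.ofSurjectiveOfKerEq : N ≃ₗ[R] P :=
  (p.quotKerEquivOfSurjective hp).symm ≪≫ₗ Submodule.quotEquivOfEq _ _ h ≪≫ₗ
    q.quotKerEquivOfSurjective hq

@[simp]
theorem LinearEquiv.ofSurjectiveOfKerEq_apply (x : M) :
    LinearEquiv.ofSurjectiveOfKerEq p q hp hq h (p x) = q x := by
  simp [LinearEquiv.ofSurjectiveOfKerEq, quotKerEquivOfSurjective_symm_apply]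

end OfSurjective

namespace IsGNSQuadruple

variable {A : Type*} [Ring A] [Algebra ℂ A] [StarRing A] [StarModule ℂ A] {ω : A →ₗ[ℂ] ℂ}
  {H : Type*} [NormedAddCommGroup H] [InnerProductSpace ℂ H] [CompleteSpace H]
  {H' : Type*} [NormedAddCommGroup H'] [InnerProductSpace ℂ H'] [CompleteSpace H']
  {D : Submodule ℂ H} {π : A →ₐ[ℂ] Module.End ℂ D} {ψ : D}
  {D' : Submodule ℂ H'} {π' : A →ₐ[ℂ] Module.End ℂ D'} {ψ' : D'}

theorem inner_apply_apply (hGNS : IsGNSQuadruple ω D π ψ) (b c : A) :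
    inner ℂ ((π b ψ : D) : H) ((π c ψ : D) : H) = ω (star b * c) := by
  rw [← star_star b, hGNS.2.1, star_star, hGNS.2.2.2, map_mul, Module.End.mul_apply]

theorem norm_apply_eq (hGNS : IsGNSQuadruple ω D π ψ) (hGNS' : IsGNSQuadruple ω D' π' ψ')
    (b : A) : ‖π b ψ‖ = ‖π' b ψ'‖ := by
  rw [@norm_eq_sqrt_re_inner ℂ, @norm_eq_sqrt_re_inner ℂ, Submodule.coe_inner,
    Submodule.coe_inner, hGNS.inner_apply_apply, hGNS'.inner_apply_apply]

/-- Both dense domains are `𝔄` modulo the common null space `{b | ω (b* b) = 0}` of the two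
orbit maps `b ↦ π b ψ` and `b ↦ π' b ψ'`. -/
noncomputable def domainEquiv (hGNS : IsGNSQuadruple ω D π ψ)
    (hGNS' : IsGNSQuadruple ω D' π' ψ') : D ≃ₗ[ℂ] D' :=
  LinearEquiv.ofSurjectiveOfKerEq (π.toLinearMap.flip ψ) (π'.toLinearMap.flip ψ') hGNS.2.2.1
    hGNS'.2.2.1 (ker_eq_ker_of_norm_eq (norm_apply_eq hGNS hGNS'))

variable (hGNS : IsGNSQuadruple ω D π ψ) (hGNS' : IsGNSQuadruple ω D' π' ψ')

theorem domainEquiv_apply_apply (b : A) : domainEquiv hGNS hGNS' (π b ψ) = π' b ψ' :=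
  LinearEquiv.ofSurjectiveOfKerEq_apply (π.toLinearMap.flip ψ) (π'.toLinearMap.flip ψ') _ _ _ b

theorem domainEquiv_cyclic : domainEquiv hGNS hGNS' ψ = ψ' := by
  simpa using domainEquiv_apply_apply hGNS hGNS' 1

theorem norm_domainEquiv (x : D) : ‖domainEquiv hGNS hGNS' x‖ = ‖x‖ := by
  obtain ⟨b, rfl⟩ := hGNS.2.2.1 x
  rw [domainEquiv_apply_apply, norm_apply_eq hGNS hGNS']

theorem domainEquiv_map_apply (a : A) (x : D) :
    domainEquiv hGNS hGNS' (π a x) = π' a (domainEquiv hGNS hGNS' x) := by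
  obtain ⟨b, rfl⟩ := hGNS.2.2.1 x
  rw [← Module.End.mul_apply, ← map_mul, domainEquiv_apply_apply, domainEquiv_apply_apply,
    map_mul, Module.End.mul_apply]

end IsGNSQuadruple

theorem gns_uniqueness_general {A : Type*} [Ring A] [Algebra ℂ A] [StarRing A] [StarModule ℂ A]
    (ω : A →ₗ[ℂ] ℂ)
    {H : Type*} [NormedAddCommGroup H] [InnerProductSpace ℂ H] [CompleteSpace H]
    {H' : Type*} [NormedAddCommGroup H'] [InnerProductSpace ℂ H'] [CompleteSpace H']
    (D : Submodule ℂ H) (π : A →ₐ[ℂ] Module.End ℂ D) (ψ : D)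
    (D' : Submodule ℂ H') (π' : A →ₐ[ℂ] Module.End ℂ D') (ψ' : D')
    (hGNS : IsGNSQuadruple ω D π ψ) (hGNS' : IsGNSQuadruple ω D' π' ψ') :
    ∃ U : H →ₗᵢ[ℂ] H',
      Function.Surjective U ∧
      D.map U.toLinearMap = D' ∧
      U ((ψ : D) : H) = ((ψ' : D') : H') ∧
      ∀ (a : A) (x : D) (hUx : U ((x : D) : H) ∈ D'),
        (((π' a) ⟨U ((x : D) : H), hUx⟩ : D') : H') = U (((π a) x : D) : H) := by
  set V := hGNS.domainEquiv hGNS'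
  have hdense : DenseRange D.subtype := by simpa [DenseRange] using hGNS.1
  have hdense' : DenseRange D'.subtype := by simpa [DenseRange] using hGNS'.1
  set U := V.extendOfIsometry D.subtype D'.subtype hdense hdense' (hGNS.norm_domainEquiv hGNS')
  have hU (x : D) : U x = V x := V.extendOfIsometry_eq _ _ hdense hdense' _ x
  refine ⟨U.toLinearIsometry, U.surjective, ?_, ?_, ?_⟩
  · ext y
    refine ⟨?_, fun hy => ⟨V.symm ⟨y, hy⟩, (V.symm ⟨y, hy⟩).2, by simp [hU]⟩⟩
    rintro ⟨x, hx, rfl⟩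
    exact (hU ⟨x, hx⟩).symm ▸ (V ⟨x, hx⟩).2
  · simpa [hU] using congrArg Subtype.val (hGNS.domainEquiv_cyclic hGNS')
  · intro a x hx
    simp only [LinearIsometryEquiv.coe_toLinearIsometry, hU, V, hGNS.domainEquiv_map_apply]

/-- **GNS construction (uniqueness).** Two GNS quadruples for the same `(𝔄, ω)` are related by
a surjective linear isometry `U : H → H'` with `U(D) = D'`, `Uψ = ψ'` and
`π'(a) ∘ U = U ∘ π(a)` on `D`. -/
theorem gns_uniqueness {A : Type*} [Ring A] [Algebra ℂ A] [StarRing A] [StarModule ℂ A]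
    (ω : A →ₗ[ℂ] ℂ) (hpos : ∀ a : A, 0 ≤ ω (star a * a)) (hone : ω 1 ≠ 0)
    {H : Type*} [NormedAddCommGroup H] [InnerProductSpace ℂ H] [CompleteSpace H]
    {H' : Type*} [NormedAddCommGroup H'] [InnerProductSpace ℂ H'] [CompleteSpace H']
    (D : Submodule ℂ H) (π : A →ₐ[ℂ] Module.End ℂ D) (ψ : D)
    (D' : Submodule ℂ H') (π' : A →ₐ[ℂ] Module.End ℂ D') (ψ' : D')
    (hGNS : IsGNSQuadruple ω D π ψ) (hGNS' : IsGNSQuadruple ω D' π' ψ') :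
    ∃ U : H →ₗᵢ[ℂ] H',
      Function.Surjective U ∧
      D.map U.toLinearMap = D' ∧
      U ((ψ : D) : H) = ((ψ' : D') : H') ∧
      ∀ (a : A) (x : D) (hUx : U ((x : D) : H) ∈ D'),
        (((π' a) ⟨U ((x : D) : H), hUx⟩ : D') : H') = U (((π a) x : D) : H) :=
  gns_uniqueness_general ω D π ψ D' π' ψ' hGNS hGNS'
end

section
/- Algebraic resolvent condition for essential self-adjointness in every GNS representation. Let 𝔄 be a unital *-algebra, ω : 𝔄 → ℂ a positive linear functional with ω(1) ≠ 0, (H, D, π, ψ) a GNS quadruple for (𝔄, ω), and a ∈ 𝔄 with a* = a. If there exist b₊, b₋ ∈ 𝔄 such that (a + i·1)·b₊ = 1 and (a − i·1)·b₋ = 1, then the densely defined operator T on H with domain D given by Tx = π(a)x is essentially self-adjoint. -/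
open scoped ComplexOrder

/-- A densely defined operator is essentially self-adjoint if its closure is self-adjoint. -/
def EssSelfAdjoint {H : Type*} [NormedAddCommGroup H] [InnerProductSpace ℂ H] [CompleteSpace H]
    (T : H →ₗ.[ℂ] H) : Prop :=
  T.closure.adjoint = T.closure

/-!
Since `a* = a`, the operator `T = π(a)` on `D` is symmetric, and `π(b±)` maps `D` into `D` with
`(T ± i) π(b±) = 1`, so the ranges of `T ± i` contain the dense subspace `D`. For symmetric `T`,
`‖(T ± i)x‖² = ‖Tx‖² + ‖x‖²`, so `T̄ ± i` is bounded below on the complete graph of the closure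
`T̄` and therefore has closed, dense, hence full range. A symmetric `S` with `S ± i` onto is
self-adjoint: for `y ∈ dom S*` solve `(S - i)x = (S* - i)y`; then `y - x` is orthogonal to the
range of `S + i`, which is everything, so `y = x ∈ dom S`.
-/

open scoped InnerProductSpace

namespace LinearPMap

section FormalAdjoint

variable {𝕜 E F : Type*} [RCLike 𝕜] [NormedAddCommGroup E] [InnerProductSpace 𝕜 E]
  [NormedAddCommGroup F] [InnerProductSpace 𝕜 F] {T : E →ₗ.[𝕜] F} {S : F →ₗ.[𝕜] E}

theorem IsFormalAdjoint.closure_right (h : T.IsFormalAdjoint S) (hS : S.IsClosable) :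
    T.IsFormalAdjoint S.closure := by
  intro x y
  have hclosed : _root_.IsClosed {q : F × E | ⟪T x, q.1⟫_𝕜 = ⟪(x : E), q.2⟫_𝕜} :=
    isClosed_eq (continuous_const.inner continuous_fst) (continuous_const.inner continuous_snd)
  have hgraph : (S.graph : Set (F × E)) ⊆ {q | ⟪T x, q.1⟫_𝕜 = ⟪(x : E), q.2⟫_𝕜} := by
    rintro ⟨q₁, q₂⟩ hq
    obtain ⟨z, rfl, rfl⟩ := S.mem_graph_iff.mp hq
    exact h x z
  have hy : ((y : F), S.closure y) ∈ _root_.closure (S.graph : Set (F × E)) := by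
    rw [← Submodule.topologicalClosure_coe, hS.graph_closure_eq_closure_graph]
    exact S.closure.mem_graph y
  exact closure_minimal hgraph hclosed hy

end FormalAdjoint

section Symmetric

variable {H : Type*} [NormedAddCommGroup H] [InnerProductSpace ℂ H] {T : H →ₗ.[ℂ] H}

theorem IsFormalAdjoint.norm_add_smul_sq (hT : T.IsFormalAdjoint T) {c : ℂ} (hc : c.re = 0)
    (x : T.domain) : ‖T x + c • (x : H)‖ ^ 2 = ‖T x‖ ^ 2 + ‖c‖ ^ 2 * ‖(x : H)‖ ^ 2 := by
  have him : (⟪T x, (x : H)⟫_ℂ).im = 0 := by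
    rw [← Complex.conj_eq_iff_im, inner_conj_symm, hT x x]
  rw [norm_add_sq (𝕜 := ℂ), inner_smul_right, norm_smul, RCLike.re_to_complex, Complex.mul_re,
    hc, him]
  ring

theorem IsFormalAdjoint.norm_graph_le (hT : T.IsFormalAdjoint T) {c : ℂ} (hc : c.re = 0)
    (hc' : ‖c‖ = 1) (x : T.domain) : max ‖(x : H)‖ ‖T x‖ ≤ ‖T x + c • (x : H)‖ := by
  have h := hT.norm_add_smul_sq hc x
  rw [hc', one_pow, one_mul] at h
  exact max_le (by nlinarith [norm_nonneg (T x + c • (x : H)), norm_nonneg (x : H)])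
    (by nlinarith [norm_nonneg (T x + c • (x : H)), norm_nonneg (T x)])

variable [CompleteSpace H]

theorem IsFormalAdjoint.isClosable (hd : Dense (T.domain : Set H)) (hT : T.IsFormalAdjoint T) :
    T.IsClosable :=
  (adjoint_isClosed hd).isClosable.leIsClosable (hT.le_adjoint hd)

theorem IsFormalAdjoint.closure (hd : Dense (T.domain : Set H)) (hT : T.IsFormalAdjoint T) :
    T.closure.IsFormalAdjoint T.closure :=
  (hT.closure_right (hT.isClosable hd)).symm.closure_right (hT.isClosable hd)

theorem IsFormalAdjoint.surjective_closure_add_smul (hd : Dense (T.domain : Set H))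
    (hT : T.IsFormalAdjoint T) {c : ℂ} (hc : c.re = 0) (hc' : ‖c‖ = 1)
    (hran : Dense (Set.range fun x : T.domain => T x + c • (x : H))) :
    Function.Surjective fun x : T.closure.domain => T.closure x + c • (x : H) := by
  set S := T.closure
  have : CompleteSpace S.graph := ((hT.isClosable hd).closure_isClosed).completeSpace_coe
  let L : S.graph →L[ℂ] H :=
    (ContinuousLinearMap.snd ℂ H H + c • ContinuousLinearMap.fst ℂ H H).comp S.graph.subtypeL
  have hL_antilipschitz : AntilipschitzWith 1 L := by
    refine AddMonoidHomClass.antilipschitz_of_bound L fun p => ?_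
    obtain ⟨x, hx₁, hx₂⟩ := S.mem_graph_iff.mp p.2
    have hLp : L p = S x + c • (x : H) := by simp [L, hx₁, hx₂]
    rw [NNReal.coe_one, one_mul, hLp, Submodule.coe_norm, Prod.norm_def, ← hx₁, ← hx₂]
    exact (hT.closure hd).norm_graph_le hc hc' x
  have hL_range : Set.range L = Set.univ := by
    have hsub : (Set.range fun x : T.domain => T x + c • (x : H)) ⊆ Set.range L := by
      rintro _ ⟨x, rfl⟩
      exact ⟨⟨_, le_graph_of_le T.le_closure (T.mem_graph x)⟩, rfl⟩
    rw [← (hL_antilipschitz.isClosed_range L.uniformContinuous).closure_eq]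
    exact (hran.mono hsub).closure_eq
  intro u
  obtain ⟨p, rfl⟩ : u ∈ Set.range L := hL_range ▸ Set.mem_univ u
  obtain ⟨x, hx₁, hx₂⟩ := S.mem_graph_iff.mp p.2
  exact ⟨x, by simp [L, hx₁, hx₂]⟩

open Complex in
theorem IsFormalAdjoint.isSelfAdjoint_of_surjective (hd : Dense (T.domain : Set H))
    (hT : T.IsFormalAdjoint T)
    (hplus : Function.Surjective fun x : T.domain => T x + I • (x : H))
    (hminus : Function.Surjective fun x : T.domain => T x + (-I) • (x : H)) :
    IsSelfAdjoint T := by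
  have key : ∀ y : T†.domain, ∃ x : T.domain, (x : H) = y ∧ T x = T† y := by
    intro y
    obtain ⟨x, hx⟩ := hminus (T† y + (-I) • (y : H))
    have hdiff : T† y - T x = I • ((y : H) - x) := by
      linear_combination (norm := module) -hx
    have hperp : ∀ w : T.domain, ⟪(y : H) - x, T w + I • (w : H)⟫_ℂ = 0 := by
      intro w
      have hw : ⟪(y : H) - x, T w⟫_ℂ = ⟪T† y - T x, (w : H)⟫_ℂ := by
        rw [inner_sub_left, inner_sub_left, adjoint_isFormalAdjoint hd y w, hT x w]
      rw [inner_add_right, inner_smul_right, hw, hdiff, inner_smul_left, conj_I]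
      ring
    obtain ⟨w, hw⟩ := hplus ((y : H) - x)
    have hyx : (y : H) - x = 0 := by
      have h := hperp w
      rwa [show T w + I • (w : H) = y - x from hw, inner_self_eq_zero] at h
    refine ⟨x, (sub_eq_zero.mp hyx).symm, ?_⟩
    rw [hyx, smul_zero, sub_eq_zero] at hdiff
    exact hdiff.symm
  refine isSelfAdjoint_def.mpr (le_antisymm (le_of_le_graph ?_) (hT.le_adjoint hd))
  rintro ⟨p₁, p₂⟩ hp
  obtain ⟨y, rfl, rfl⟩ := T†.mem_graph_iff.mp hp
  obtain ⟨x, hx₁, hx₂⟩ := key y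
  exact T.mem_graph_iff.mpr ⟨x, hx₁, hx₂⟩

open Complex in
theorem IsFormalAdjoint.isSelfAdjoint_closure (hd : Dense (T.domain : Set H))
    (hT : T.IsFormalAdjoint T)
    (hplus : Dense (Set.range fun x : T.domain => T x + I • (x : H)))
    (hminus : Dense (Set.range fun x : T.domain => T x + (-I) • (x : H))) :
    IsSelfAdjoint T.closure :=
  (hT.closure hd).isSelfAdjoint_of_surjective (hd.mono T.le_closure.1)
    (hT.surjective_closure_add_smul hd (by simp) (by simp) hplus)
    (hT.surjective_closure_add_smul hd (by simp) (by simp) hminus)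

end Symmetric

end LinearPMap

theorem AlgHom.apply_add_smul_apply_of_mul_eq_one {R A M : Type*} [CommRing R] [Ring A]
    [Algebra R A] [AddCommGroup M] [Module R M] (π : A →ₐ[R] Module.End R M) {a b : A} {c : R}
    (h : (a + c • 1) * b = 1) (u : M) : π a (π b u) + c • π b u = u := by
  simpa using congrArg (fun t => π t u) h

theorem ess_selfAdjoint_of_algebraic_resolvent_general
    {A : Type*} [Ring A] [Algebra ℂ A] [StarRing A] [StarModule ℂ A]
    (ω : A →ₗ[ℂ] ℂ)
    {H : Type*} [NormedAddCommGroup H] [InnerProductSpace ℂ H] [CompleteSpace H]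
    (D : Submodule ℂ H) (π : A →ₐ[ℂ] Module.End ℂ D) (ψ : D)
    (hGNS : IsGNSQuadruple ω D π ψ)
    (a : A) (ha : star a = a)
    (hres : ∃ bp bm : A, (a + Complex.I • (1 : A)) * bp = 1 ∧
      (a - Complex.I • (1 : A)) * bm = 1) :
    EssSelfAdjoint ({ domain := D, toFun := D.subtype.comp (π a) } : H →ₗ.[ℂ] H) := by
  obtain ⟨hdense, hstar, -, -⟩ := hGNS
  obtain ⟨bp, bm, hbp, hbm⟩ := hres
  set T : H →ₗ.[ℂ] H := { domain := D, toFun := D.subtype.comp (π a) }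
  have hT : T.IsFormalAdjoint T := fun x y => by
    have h := hstar a x y
    rw [ha] at h
    exact h
  have hran {b : A} {c : ℂ} (h : (a + c • 1) * b = 1) :
      Dense (Set.range fun x : T.domain => T x + c • (x : H)) :=
    hdense.mono fun u hu =>
      ⟨π b ⟨u, hu⟩, congrArg Subtype.val (π.apply_add_smul_apply_of_mul_eq_one h ⟨u, hu⟩)⟩
  rw [sub_eq_add_neg, ← neg_smul] at hbm
  exact hT.isSelfAdjoint_closure hdense (hran hbp) (hran hbm)

/-- **Algebraic resolvent condition for essential self-adjointness in every GNS
representation.** If there are `b₊, b₋ ∈ 𝔄` with `(a + i·1)b₊ = 1` and `(a − i·1)b₋ = 1`,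
then the GNS operator `π(a)` with domain `D` is essentially self-adjoint. -/
theorem ess_selfAdjoint_of_algebraic_resolvent
    {A : Type*} [Ring A] [Algebra ℂ A] [StarRing A] [StarModule ℂ A]
    (ω : A →ₗ[ℂ] ℂ) (hpos : ∀ a : A, 0 ≤ ω (star a * a)) (hone : ω 1 ≠ 0)
    {H : Type*} [NormedAddCommGroup H] [InnerProductSpace ℂ H] [CompleteSpace H]
    (D : Submodule ℂ H) (π : A →ₐ[ℂ] Module.End ℂ D) (ψ : D)
    (hGNS : IsGNSQuadruple ω D π ψ)
    (a : A) (ha : star a = a)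
    (hres : ∃ bp bm : A, (a + Complex.I • (1 : A)) * bp = 1 ∧
      (a - Complex.I • (1 : A)) * bm = 1) :
    EssSelfAdjoint ({ domain := D, toFun := D.subtype.comp (π a) } : H →ₗ.[ℂ] H) :=
  ess_selfAdjoint_of_algebraic_resolvent_general ω D π ψ hGNS a ha hres
end

section
/- Determinacy of the moment problem for the square of a Gaussian variable. Any two finite Borel measures μ and ν on ℝ satisfying ∫_ℝ λⁿ dμ(λ) = π^{-1/2} ∫_ℝ x^{2n} e^{−x²} dx = ∫_ℝ λⁿ dν(λ) for every n ∈ ℕ are equal. -/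
open MeasureTheory Real Set Filter Complex


lemma integrable_pow_exp_neg_sq (n : ℕ) :
    Integrable (fun x : ℝ => x ^ n * Real.exp (-x ^ 2)) := by
  have := integrable_rpow_mul_exp_neg_mul_sq (b := 1) one_pos (s := (n:ℝ))
    (lt_of_lt_of_le neg_one_lt_zero (by positivity))
  refine this.congr (Filter.Eventually.of_forall fun x => ?_)
  simp only [Real.rpow_natCast, neg_one_mul]

lemma integral_pow_exp_neg_sq (n : ℕ) :
    ∫ x, x ^ (2 * n) * Real.exp (-x ^ 2) = Real.Gamma (n + 1/2) := by
  have hint := integrable_pow_exp_neg_sq (2 * n)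
  have heven : ∀ x : ℝ, (-x) ^ (2*n) * Real.exp (-(-x) ^ 2) = x ^ (2*n) * Real.exp (-x ^ 2) := by
    intro x
    rw [show (-x) ^ (2*n) = x ^ (2*n) by rw [pow_mul, pow_mul, neg_sq], neg_sq]
  have hsplit : (∫ x, x ^ (2*n) * Real.exp (-x ^ 2))
      = (∫ x in Iic (0:ℝ), x ^ (2*n) * Real.exp (-x ^ 2))
      + ∫ x in Ioi (0:ℝ), x ^ (2*n) * Real.exp (-x ^ 2) := by
    rw [← integral_add_compl measurableSet_Iic hint, compl_Iic]
  have hneg : (∫ x in Iic (0:ℝ), x ^ (2*n) * Real.exp (-x ^ 2))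
      = ∫ x in Ioi (0:ℝ), x ^ (2*n) * Real.exp (-x ^ 2) := by
    have := integral_comp_neg_Ioi (c := (0:ℝ)) (f := fun x => x ^ (2*n) * Real.exp (-x ^ 2))
    rw [neg_zero] at this
    rw [← this]
    exact setIntegral_congr_fun measurableSet_Ioi fun x _ => heven x
  have hIoi : (∫ x in Ioi (0:ℝ), x ^ (2*n) * Real.exp (-x ^ 2))
      = (1/2) * Real.Gamma (n + 1/2) := by
    have h := integral_rpow_mul_exp_neg_rpow (p := 2) (q := (2*n:ℝ)) two_pos
      (lt_of_lt_of_le neg_one_lt_zero (by positivity))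
    rw [show ((2*n:ℝ) + 1)/2 = n + 1/2 by push_cast; ring] at h
    rw [← h]
    refine setIntegral_congr_fun measurableSet_Ioi fun x _ => ?_
    have h1 : x ^ (2*(n:ℝ)) = x ^ (2*n : ℕ) := by
      rw [← Real.rpow_natCast x (2*n)]; norm_num
    have h2 : x ^ ((2:ℝ)) = x ^ (2 : ℕ) := by
      rw [← Real.rpow_natCast x 2]; norm_num
    rw [h1, h2]
  rw [hsplit, hneg, hIoi]; ring

noncomputable def gm (n : ℕ) : ℝ := (Real.sqrt Real.pi)⁻¹ * ∫ x, x ^ (2 * n) * Real.exp (-x ^ 2)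

lemma gm_eq (n : ℕ) : gm n = Real.Gamma (n + 1/2) / Real.sqrt Real.pi := by
  rw [gm, integral_pow_exp_neg_sq]; ring

lemma gm_pos (n : ℕ) : 0 < gm n := by
  rw [gm_eq]
  exact div_pos (Real.Gamma_pos_of_pos (by positivity)) (Real.sqrt_pos.2 Real.pi_pos)

lemma gm_zero : gm 0 = 1 := by
  rw [gm_eq]
  push_cast
  rw [zero_add, Real.Gamma_one_half_eq, div_self (by positivity)]

lemma gm_succ (n : ℕ) : gm (n + 1) = (n + 1/2) * gm n := by
  rw [gm_eq, gm_eq]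
  push_cast
  rw [show ((n:ℝ) + 1 + 1/2) = (n + 1/2) + 1 by ring, Real.Gamma_add_one (by positivity)]
  ring

lemma gm_le_factorial (n : ℕ) : gm n ≤ n.factorial := by
  induction n with
  | zero => simp [gm_zero]
  | succ k ih =>
    rw [gm_succ, Nat.factorial_succ]
    push_cast
    nlinarith [gm_pos k, Nat.one_le_iff_ne_zero.2 (Nat.factorial_ne_zero k),
      (Nat.one_le_iff_ne_zero.2 (Nat.factorial_ne_zero k) : 1 ≤ k.factorial)]

lemma two_mul_factorial_le (n : ℕ) : ((2*n).factorial : ℝ) ≤ 4 ^ n * (n.factorial)^2 := by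
  have : (2*n).factorial ≤ 4^n * (n.factorial)^2 := by
    induction n with
    | zero => simp
    | succ k ih =>
      have h2 : (2*(k+1)) = (2*k+1)+1 := by ring
      rw [h2, Nat.factorial_succ, Nat.factorial_succ]
      calc ((2*k+1)+1) * ((2*k+1) * (2*k).factorial)
          ≤ ((2*k+1)+1) * ((2*k+1) * (4^k * k.factorial^2)) :=
            Nat.mul_le_mul_left _ (Nat.mul_le_mul_left _ ih)
        _ ≤ 4^(k+1) * ((k+1).factorial)^2 := by
            rw [Nat.factorial_succ]; ring_nf; nlinarith [Nat.factorial_pos k]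
  exact_mod_cast this
-- assume p1 contents available; for modular testing, axiomatize

section moments
variable {μ : Measure ℝ} [IsFiniteMeasure μ]

lemma integrable_pow_even (hμ : ∀ n : ℕ, ∫ t, t ^ n ∂μ = gm n) (k : ℕ) :
    Integrable (fun t => t ^ (2*k)) μ := by
  by_contra h
  have h2 := hμ (2*k)
  rw [integral_undef h] at h2
  exact (gm_pos (2*k)).ne' h2.symm

lemma integrable_pow_mom (hμ : ∀ n : ℕ, ∫ t, t ^ n ∂μ = gm n) (n : ℕ) :
    Integrable (fun t => t ^ n) μ := by
  refine Integrable.mono' ((integrable_const (1:ℝ)).add (integrable_pow_even hμ n))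
    (measurable_id.pow_const n).aestronglyMeasurable (ae_of_all _ fun t => ?_)
  show ‖t ^ n‖ ≤ 1 + t ^ (2*n)
  have ht2 : (0:ℝ) ≤ t ^ (2*n) := (even_two_mul n).pow_nonneg t
  have habs : |t| ^ (2*n) = t ^ (2*n) := by
    rw [pow_abs, _root_.abs_of_nonneg ht2]
  rw [Real.norm_eq_abs, ← pow_abs]
  rcases le_or_gt (|t|) 1 with h1 | h1
  · have := pow_le_one₀ (abs_nonneg t) h1 (n := n)
    simpa using le_add_of_le_of_nonneg this ht2
  · have : |t| ^ n ≤ |t| ^ (2*n) := pow_le_pow_right₀ h1.le (by omega)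
    rw [habs] at this
    linarith

lemma integrable_abs_pow (hμ : ∀ n : ℕ, ∫ t, t ^ n ∂μ = gm n) (n : ℕ) :
    Integrable (fun t => |t| ^ n) μ := by
  have := (integrable_pow_mom hμ n).abs
  refine this.congr (ae_of_all _ fun t => ?_)
  exact (pow_abs t n).symm

lemma abs_pow_integral_le (hμ : ∀ n : ℕ, ∫ t, t ^ n ∂μ = gm n) (n : ℕ) :
    ∫ t, |t| ^ n ∂μ ≤ ((μ univ).toReal + 1) * (2^n * n.factorial) := by
  set A : ℝ := 2^n * n.factorial with hA
  have hApos : 0 < A := by positivity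
  have hgm : gm (2*n) ≤ A^2 := by
    calc gm (2*n) ≤ (2*n).factorial := gm_le_factorial (2*n)
      _ ≤ 4^n * (n.factorial)^2 := two_mul_factorial_le n
      _ = A^2 := by
          rw [hA, show (4:ℝ)^n = (2^n)^2 by rw [← pow_mul, mul_comm n 2, pow_mul]; norm_num]; ring
  have hpt : ∀ t : ℝ, |t| ^ n ≤ A + t^(2*n) / A := by
    intro t
    have ht2 : t ^ (2*n) = |t|^n * |t|^n := by
      rw [pow_abs, ← abs_mul, ← pow_add, ← two_mul, _root_.abs_of_nonneg ((even_two_mul n).pow_nonneg t)]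
    rcases le_or_gt (|t|^n) A with h | h
    · have : (0:ℝ) ≤ t^(2*n) / A := div_nonneg ((even_two_mul n).pow_nonneg t) hApos.le
      linarith
    · have h2 : |t|^n ≤ t^(2*n) / A := by
        rw [le_div_iff₀ hApos, ht2]
        exact mul_le_mul_of_nonneg_left h.le (by positivity)
      linarith [hApos]
  have hint : Integrable (fun t => A + t^(2*n)/A) μ :=
    (integrable_const A).add ((integrable_pow_even hμ n).div_const A)
  calc ∫ t, |t| ^ n ∂μ ≤ ∫ t, (A + t^(2*n)/A) ∂μ :=
        integral_mono (integrable_abs_pow hμ n) hint hpt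
    _ = A * (μ univ).toReal + gm (2*n) / A := by
        rw [integral_add (integrable_const A) ((integrable_pow_even hμ n).div_const A),
          integral_const, integral_div, hμ (2*n)]
        simp [mul_comm, Measure.real]
    _ ≤ A * (μ univ).toReal + A := by
        have : gm (2*n)/A ≤ A := by
          rw [div_le_iff₀ hApos]; nlinarith
        linarith
    _ = ((μ univ).toReal + 1) * A := by ring

lemma integrable_exp_abs (hμ : ∀ n : ℕ, ∫ t, t ^ n ∂μ = gm n) {c : ℝ} (hc0 : 0 ≤ c)
    (hc : c < 1/2) : Integrable (fun t => Real.exp (c * |t|)) μ := by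
  set C : ℝ := (μ univ).toReal + 1 with hC
  have hCpos : 0 < C := by positivity
  have key : ∀ n : ℕ, ∫ t, (c*|t|)^n / n.factorial ∂μ ≤ C * (2*c)^n := by
    intro n
    have heq : (fun t : ℝ => (c*|t|)^n / n.factorial)
        = fun t => (c^n / n.factorial) * |t|^n := by
      ext t; rw [mul_pow]; ring
    rw [heq, integral_const_mul]
    have h1 := abs_pow_integral_le hμ n
    have h2 : (0:ℝ) ≤ c^n / n.factorial := by positivity
    calc c^n / n.factorial * ∫ t, |t|^n ∂μ ≤ c^n / n.factorial * (C * (2^n * n.factorial)) :=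
          mul_le_mul_of_nonneg_left h1 h2
      _ = C * (2*c)^n * (n.factorial / n.factorial) := by rw [mul_pow]; ring
      _ = C * (2*c)^n := by
          rw [div_self (by exact_mod_cast Nat.factorial_ne_zero n), mul_one]
  have hterm_int : ∀ n : ℕ, Integrable (fun t => (c*|t|)^n / n.factorial) μ := by
    intro n
    have : Integrable (fun t => (c^n / n.factorial) * |t|^n) μ :=
      (integrable_abs_pow hμ n).const_mul _
    refine this.congr (ae_of_all _ fun t => ?_)
    show c ^ n / n.factorial * |t| ^ n = (c * |t|) ^ n / n.factorial
    rw [mul_pow]; ring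
  constructor
  · exact (Real.continuous_exp.comp (continuous_const.mul _root_.continuous_abs)).aestronglyMeasurable
  · rw [hasFiniteIntegral_iff_ofReal (ae_of_all _ fun t => (Real.exp_pos _).le)]
    have hsum : Summable (fun n : ℕ => C * (2*c)^n) :=
      (summable_geometric_of_lt_one (by positivity) (by linarith)).mul_left C
    calc ∫⁻ t, ENNReal.ofReal (Real.exp (c * |t|)) ∂μ
        = ∫⁻ t, ∑' n : ℕ, ENNReal.ofReal ((c*|t|)^n / n.factorial) ∂μ := by
          apply lintegral_congr; intro t
          rw [Real.exp_eq_exp_ℝ, NormedSpace.exp_eq_tsum_div,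
            ENNReal.ofReal_tsum_of_nonneg (fun n => by positivity)
            (Real.summable_pow_div_factorial _)]
      _ = ∑' n : ℕ, ∫⁻ t, ENNReal.ofReal ((c*|t|)^n / n.factorial) ∂μ := by
          refine lintegral_tsum fun n => ?_
          exact (ENNReal.measurable_ofReal.comp
            ((((measurable_const.mul measurable_abs).pow_const n).div_const _))).aemeasurable
      _ ≤ ∑' n : ℕ, ENNReal.ofReal (C * (2*c)^n) := by
          refine ENNReal.tsum_le_tsum fun n => ?_
          rw [← ofReal_integral_eq_lintegral_ofReal (hterm_int n)
            (ae_of_all _ fun t => by positivity)]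
          exact ENNReal.ofReal_le_ofReal (key n)
      _ < ⊤ := by
          rw [← ENNReal.ofReal_tsum_of_nonneg (fun n => by positivity) hsum]
          exact ENNReal.ofReal_lt_top

lemma integrable_abs_mul_exp (hμ : ∀ n : ℕ, ∫ t, t ^ n ∂μ = gm n) {c : ℝ} (hc0 : 0 ≤ c)
    (hc : c < 3/8) : Integrable (fun t => |t| * Real.exp (c * |t|)) μ := by
  have h2 : Integrable (fun t => 8 * Real.exp ((c + 1/8) * |t|)) μ :=
    (integrable_exp_abs hμ (by linarith) (by linarith)).const_mul 8
  refine h2.mono' ((_root_.continuous_abs.mul (Real.continuous_exp.comp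
    (continuous_const.mul _root_.continuous_abs))).aestronglyMeasurable) (ae_of_all _ fun t => ?_)
  have h3 : |t| ≤ 8 * Real.exp (|t|/8) := by
    have := Real.add_one_le_exp (|t|/8)
    nlinarith [abs_nonneg t, Real.exp_pos (|t|/8)]
  rw [Real.norm_eq_abs, _root_.abs_of_nonneg (by positivity)]
  calc |t| * Real.exp (c * |t|) ≤ (8 * Real.exp (|t|/8)) * Real.exp (c * |t|) :=
        mul_le_mul_of_nonneg_right h3 (Real.exp_pos _).le
    _ = 8 * Real.exp ((c + 1/8) * |t|) := by
        rw [mul_assoc, ← Real.exp_add]; ring_nf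
end moments


section phi
variable {μ : Measure ℝ} [IsFiniteMeasure μ]


noncomputable def phi (μ : Measure ℝ) (z : ℂ) : ℂ := ∫ t, Complex.exp (z * t) ∂μ

lemma norm_cexp_mul_ofReal (z : ℂ) (t : ℝ) : ‖Complex.exp (z * t)‖ = Real.exp (z.re * t) := by
  rw [Complex.norm_exp]
  congr 1
  simp [Complex.mul_re]

lemma integrable_cexp_mul (hμ : ∀ n : ℕ, ∫ t, t ^ n ∂μ = gm n) {z : ℂ} (hz : |z.re| < 1/2) :
    Integrable (fun t : ℝ => Complex.exp (z * t)) μ := by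
  refine (integrable_exp_abs hμ (abs_nonneg z.re) hz).mono'
    ((Complex.continuous_exp.comp (continuous_const.mul Complex.continuous_ofReal)).aestronglyMeasurable)
    (ae_of_all _ fun t => ?_)
  rw [norm_cexp_mul_ofReal]
  exact Real.exp_le_exp.2 ((le_abs_self _).trans (le_of_eq (abs_mul _ _)))

lemma phi_hasDeriv (hμ : ∀ n : ℕ, ∫ t, t ^ n ∂μ = gm n) {z₀ : ℂ} (hz : |z₀.re| < 1/4) :
    DifferentiableAt ℂ (phi μ) z₀ := by
  set ε : ℝ := (1/4 - |z₀.re|)/2 with hε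
  have hεpos : 0 < ε := by rw [hε]; linarith
  set c : ℝ := |z₀.re| + ε with hc
  have hc14 : c < 1/4 := by rw [hc, hε]; linarith
  have hbound_int : Integrable (fun t => |t| * Real.exp (c * |t|)) μ :=
    integrable_abs_mul_exp hμ (by positivity) (by linarith)
  have hmain := hasDerivAt_integral_of_dominated_loc_of_deriv_le (μ := μ)
    (F := fun (z : ℂ) (t : ℝ) => Complex.exp (z * t))
    (F' := fun (z : ℂ) (t : ℝ) => (t : ℂ) * Complex.exp (z * t))
    (x₀ := z₀) (bound := fun t => |t| * Real.exp (c * |t|)) (Metric.ball_mem_nhds z₀ hεpos)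
    (Filter.Eventually.of_forall fun z =>
      (Complex.continuous_exp.comp (continuous_const.mul Complex.continuous_ofReal)).aestronglyMeasurable)
    (integrable_cexp_mul hμ (by linarith))
    ((Complex.continuous_ofReal.mul (Complex.continuous_exp.comp
      (continuous_const.mul Complex.continuous_ofReal))).aestronglyMeasurable)
    (ae_of_all _ fun t z hzball => ?_) hbound_int (ae_of_all _ fun t z hzball => ?_)
  · exact hmain.2.differentiableAt
  · -- norm bound
    rw [norm_mul, Complex.norm_real, Real.norm_eq_abs, norm_cexp_mul_ofReal]
    have hre : |z.re| ≤ c := by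
      have h1 : |z.re - z₀.re| ≤ ‖z - z₀‖ := by
        simpa using Complex.abs_re_le_norm (z - z₀)
      have h2 : ‖z - z₀‖ < ε := by simpa [Metric.mem_ball, dist_eq_norm] using hzball
      calc |z.re| ≤ |z₀.re| + |z.re - z₀.re| := by
            have := abs_sub_abs_le_abs_sub z.re z₀.re; linarith [_root_.abs_abs (z.re)]
        _ ≤ |z₀.re| + ε := by linarith
        _ = c := hc.symm
    have : Real.exp (z.re * t) ≤ Real.exp (c * |t|) := by
      refine Real.exp_le_exp.2 ?_
      calc z.re * t ≤ |z.re * t| := le_abs_self _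
        _ = |z.re| * |t| := abs_mul _ _
        _ ≤ c * |t| := mul_le_mul_of_nonneg_right hre (abs_nonneg t)
    exact mul_le_mul_of_nonneg_left this (abs_nonneg t)
  · -- HasDerivAt in z
    have h := ((hasDerivAt_id z).mul_const (t : ℂ)).cexp
    simpa [mul_comm] using h

lemma phi_series (hμ : ∀ n : ℕ, ∫ t, t ^ n ∂μ = gm n) {z : ℂ} (hz : ‖z‖ < 1/2) :
    phi μ z = ∑' n : ℕ, z ^ n / n.factorial * (gm n : ℂ) := by
  set C : ℝ := (μ univ).toReal + 1 with hC
  have hCpos : 0 < C := by positivity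
  have hexp : ∀ t : ℝ, Complex.exp (z * t) = ∑' n : ℕ, (z * t) ^ n / n.factorial := by
    intro t
    rw [Complex.exp_eq_exp_ℂ, NormedSpace.exp_eq_tsum_div]
  have hmeas : ∀ n : ℕ, AEStronglyMeasurable (fun t : ℝ => (z * t) ^ n / (n.factorial : ℂ)) μ :=
    fun n => (((continuous_const.mul Complex.continuous_ofReal).pow n).div_const _).aestronglyMeasurable
  have hnorm : ∀ (n : ℕ) (t : ℝ), ‖(z * (t:ℂ)) ^ n / (n.factorial : ℂ)‖
      = ‖z‖ ^ n / n.factorial * |t| ^ n := by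
    intro n t
    rw [norm_div, norm_pow, norm_mul, Complex.norm_real, Real.norm_eq_abs, mul_pow]
    rw [Complex.norm_natCast]
    ring
  have hsum : (∑' n : ℕ, ∫⁻ t, ‖(z * t) ^ n / (n.factorial : ℂ)‖₊ ∂μ) ≠ ⊤ := by
    have hterm : ∀ n : ℕ, ∫⁻ t, ‖(z * t) ^ n / (n.factorial : ℂ)‖₊ ∂μ
        ≤ ENNReal.ofReal (C * (2 * ‖z‖)^n) := by
      intro n
      have hint : Integrable (fun t : ℝ => ‖z‖^n / n.factorial * |t|^n) μ :=
        (integrable_abs_pow hμ n).const_mul _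
      have : ∫⁻ t, ‖(z * t) ^ n / (n.factorial : ℂ)‖₊ ∂μ
          = ENNReal.ofReal (∫ t, ‖z‖^n / n.factorial * |t|^n ∂μ) := by
        rw [ofReal_integral_eq_lintegral_ofReal hint (ae_of_all _ fun t => by positivity)]
        apply lintegral_congr
        intro t
        rw [← enorm_eq_nnnorm, ← ofReal_norm, hnorm n t]
      rw [this]
      apply ENNReal.ofReal_le_ofReal
      rw [integral_const_mul]
      have h1 := abs_pow_integral_le hμ n
      calc ‖z‖^n / n.factorial * ∫ t, |t|^n ∂μ
          ≤ ‖z‖^n / n.factorial * (C * (2^n * n.factorial)) :=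
            mul_le_mul_of_nonneg_left h1 (by positivity)
        _ = C * (2*‖z‖)^n * (n.factorial / n.factorial) := by rw [mul_pow]; ring
        _ = C * (2*‖z‖)^n := by
            rw [div_self (by exact_mod_cast Nat.factorial_ne_zero n), mul_one]
    have hsum2 : Summable (fun n : ℕ => C * (2*‖z‖)^n) :=
      (summable_geometric_of_lt_one (by positivity) (by linarith)).mul_left C
    refine ne_top_of_le_ne_top ?_ (ENNReal.tsum_le_tsum hterm)
    rw [← ENNReal.ofReal_tsum_of_nonneg (fun n => by positivity) hsum2]
    exact ENNReal.ofReal_ne_top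
  have hswap := integral_tsum hmeas hsum
  have : phi μ z = ∑' n : ℕ, ∫ t, (z * t) ^ n / (n.factorial : ℂ) ∂μ := by
    rw [phi, ← hswap]
    apply integral_congr_ae
    exact ae_of_all _ fun t => hexp t
  rw [this]
  congr 1
  ext n
  have : (fun t : ℝ => (z * t) ^ n / (n.factorial : ℂ))
      = fun t : ℝ => (z ^ n / (n.factorial : ℂ)) * ((t : ℂ)) ^ n := by
    ext t; rw [mul_pow]; ring
  rw [this, integral_const_mul]
  have hcast : ∫ t, ((t:ℂ)) ^ n ∂μ = ((∫ t, t ^ n ∂μ : ℝ) : ℂ) := by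
    have h := integral_ofReal (𝕜 := ℂ) (f := fun t : ℝ => t ^ n) (μ := μ)
    rw [show ((∫ t, t ^ n ∂μ : ℝ) : ℂ) = (RCLike.ofReal (K := ℂ) (∫ t, t ^ n ∂μ)) by rfl, ← h]
    apply integral_congr_ae
    exact ae_of_all _ fun t => by push_cast; rfl
  rw [hcast, hμ n]
end phi


lemma char_eq (μ ν : Measure ℝ) [IsFiniteMeasure μ] [IsFiniteMeasure ν]
    (hμ : ∀ n : ℕ, ∫ t, t ^ n ∂μ = gm n) (hν : ∀ n : ℕ, ∫ t, t ^ n ∂ν = gm n) (s : ℝ) :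
    phi μ (s * I) = phi ν (s * I) := by
  set S : Set ℂ := Complex.reCLM ⁻¹' (Ioo (-(1/4) : ℝ) (1/4)) with hS
  have hSopen : IsOpen S := isOpen_Ioo.preimage Complex.reCLM.continuous
  have hmem : ∀ z : ℂ, z ∈ S ↔ |z.re| < 1/4 := by
    intro z
    rw [hS]
    simp only [mem_preimage, mem_Ioo, Complex.reCLM_apply]
    exact abs_lt.symm
  have hconv : Convex ℝ S := (convex_Ioo _ _).linear_preimage (Complex.reCLM : ℂ →L[ℝ] ℝ).toLinearMap
  have hA1 : AnalyticOnNhd ℂ (phi μ) S :=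
    DifferentiableOn.analyticOnNhd
      (fun z hz => (phi_hasDeriv hμ ((hmem z).1 hz)).differentiableWithinAt) hSopen
  have hA2 : AnalyticOnNhd ℂ (phi ν) S :=
    DifferentiableOn.analyticOnNhd
      (fun z hz => (phi_hasDeriv hν ((hmem z).1 hz)).differentiableWithinAt) hSopen
  have h0 : (0 : ℂ) ∈ S := (hmem 0).2 (by norm_num)
  have hev : phi μ =ᶠ[nhds (0:ℂ)] phi ν := by
    have hball : Metric.ball (0:ℂ) (1/4) ∈ nhds (0:ℂ) := Metric.ball_mem_nhds _ (by norm_num)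
    refine Filter.eventuallyEq_of_mem hball fun z hz => ?_
    have hz' : ‖z‖ < 1/2 := by
      have : dist z 0 < 1/4 := hz
      rw [dist_zero_right] at this
      linarith
    rw [phi_series hμ hz', phi_series hν hz']
  have := hA1.eqOn_of_preconnected_of_eventuallyEq hA2 hconv.isPreconnected h0 hev
  exact this ((hmem _).2 (by simp))

lemma integral_schwartz_eq (μ ν : Measure ℝ) [IsFiniteMeasure μ] [IsFiniteMeasure ν]
    (hchar : ∀ s : ℝ, phi μ (s * I) = phi ν (s * I)) (f : SchwartzMap ℝ ℂ) :
    ∫ t, f t ∂μ = ∫ t, f t ∂ν := by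
  set g : SchwartzMap ℝ ℂ := (FourierTransform.fourierCLE ℂ (SchwartzMap ℝ ℂ)).symm f with hg
  have hfg : ∀ t : ℝ, f t = ∫ ξ : ℝ, Complex.exp ((((-2) * π * ξ : ℝ) : ℂ) * I * t) * g ξ := by
    intro t
    have h1 : (FourierTransform.fourierCLE ℂ (SchwartzMap ℝ ℂ)) g = f :=
      (FourierTransform.fourierCLE ℂ (SchwartzMap ℝ ℂ)).apply_symm_apply f
    have h2 := FourierTransform.fourierCLE_apply (R := ℂ) g
    rw [h1] at h2
    have h3 : f t = FourierTransform.fourier (⇑g) t := by rw [h2, SchwartzMap.fourier_coe]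
    rw [h3, Real.fourier_real_eq]
    apply integral_congr_ae
    refine ae_of_all _ fun ξ => ?_
    show (Real.fourierChar (-(ξ * t)) : ℂ) • g ξ = Complex.exp ((((-2) * π * ξ : ℝ) : ℂ) * I * t) * g ξ
    rw [Real.fourierChar_apply, smul_eq_mul]
    congr 2
    push_cast
    ring
  -- the kernel
  set F : ℝ × ℝ → ℂ := fun p => Complex.exp ((((-2) * π * p.2 : ℝ) : ℂ) * I * p.1) * g p.2 with hF
  have hFnorm : ∀ p : ℝ × ℝ, ‖F p‖ = ‖g p.2‖ := by
    intro p
    rw [hF]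
    simp only [norm_mul]
    have : ((((-2) * π * p.2 : ℝ) : ℂ) * I * p.1) = ((((-2) * π * p.2 * p.1 : ℝ)) : ℂ) * I := by
      push_cast; ring
    rw [this, Complex.norm_exp_ofReal_mul_I, one_mul]
  have hFcont : Continuous F := by
    apply Continuous.mul
    · apply Complex.continuous_exp.comp
      apply Continuous.mul
      · exact Continuous.mul (Complex.continuous_ofReal.comp
          ((continuous_const.mul continuous_snd))) continuous_const
      · exact Complex.continuous_ofReal.comp continuous_fst
    · exact g.continuous.comp continuous_snd
  have key : ∀ (ρ : Measure ℝ), IsFiniteMeasure ρ →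
      ∫ t, f t ∂ρ = ∫ ξ : ℝ, phi ρ ((((-2) * π * ξ : ℝ) : ℂ) * I) * g ξ := by
    intro ρ hρ
    have huncurry : (Function.uncurry fun t ξ => F (t, ξ)) = F := by
      ext p
      simp [Function.uncurry]
    have hintF : Integrable F (ρ.prod volume) := by
      rw [integrable_prod_iff hFcont.aestronglyMeasurable]
      constructor
      · refine ae_of_all _ fun t => ?_
        refine g.integrable.norm.mono' ?_ (ae_of_all _ fun ξ => ?_)
        · exact (hFcont.comp (Continuous.prodMk_right t)).aestronglyMeasurable
        · rw [hFnorm (t, ξ)]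
      · have heq2 : (fun t => ∫ ξ, ‖F (t, ξ)‖ ∂volume) = fun _ => ∫ ξ : ℝ, ‖g ξ‖ ∂volume := by
          funext t
          exact integral_congr_ae (ae_of_all _ fun ξ => hFnorm (t, ξ))
        rw [heq2]
        exact integrable_const _
    have hint : Integrable (Function.uncurry fun t ξ => F (t, ξ)) (ρ.prod volume) := by
      rw [huncurry]; exact hintF
    calc ∫ t, f t ∂ρ = ∫ t, ∫ ξ, F (t, ξ) ∂volume ∂ρ := by
          refine integral_congr_ae (ae_of_all _ fun t => ?_)
          rw [hfg t]
      _ = ∫ ξ, ∫ t, F (t, ξ) ∂ρ ∂volume := integral_integral_swap hint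
      _ = ∫ ξ : ℝ, phi ρ ((((-2) * π * ξ : ℝ) : ℂ) * I) * g ξ := by
          refine integral_congr_ae (ae_of_all _ fun ξ => ?_)
          rw [hF]
          simp only
          rw [integral_mul_const, phi]
  rw [key μ ‹_›, key ν ‹_›]
  refine integral_congr_ae (ae_of_all _ fun ξ => ?_)
  show phi μ ((((-2) * π * ξ : ℝ) : ℂ) * I) * g ξ = phi ν ((((-2) * π * ξ : ℝ) : ℂ) * I) * g ξ
  rw [hchar ((-2) * π * ξ)]

noncomputable def bumpToSchwartz {c : ℝ} (b : ContDiffBump c) : SchwartzMap ℝ ℂ where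
  toFun := fun x => (b x : ℂ)
  smooth' := Complex.ofRealCLM.contDiff.comp b.contDiff
  decay' := by
    intro k n
    have hnorm_eq : ∀ x : ℝ, ‖iteratedFDeriv ℝ n (fun x => (b x : ℂ)) x‖
        = ‖iteratedFDeriv ℝ n (⇑b) x‖ := by
      intro x
      have h := Complex.ofRealLI.norm_iteratedFDeriv_comp_left (f := ⇑b) (x := x)
        (b.contDiffAt (n := ⊤)) (i := n) (by exact_mod_cast le_top)
      have hfun : (⇑Complex.ofRealLI ∘ ⇑b) = fun x => (b x : ℂ) := rfl
      rw [hfun] at h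
      exact h
    have hcont : Continuous fun x : ℝ => ‖x‖ ^ k * ‖iteratedFDeriv ℝ n (⇑b) x‖ :=
      (continuous_norm.pow k).mul
        ((b.contDiff (n := ⊤)).continuous_iteratedFDeriv (by exact_mod_cast le_top)).norm
    have hcs : HasCompactSupport fun x : ℝ => ‖x‖ ^ k * ‖iteratedFDeriv ℝ n (⇑b) x‖ := by
      have h1 : HasCompactSupport fun x : ℝ => ‖iteratedFDeriv ℝ n (⇑b) x‖ :=
        (b.hasCompactSupport.iteratedFDeriv n).comp_left norm_zero
      exact HasCompactSupport.mul_left h1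
    obtain ⟨x₀, hx₀⟩ := hcont.exists_forall_ge_of_hasCompactSupport hcs
    refine ⟨‖x₀‖ ^ k * ‖iteratedFDeriv ℝ n (⇑b) x₀‖, fun x => ?_⟩
    rw [hnorm_eq x]
    exact hx₀ x

section meas
variable (μ ν : Measure ℝ) [IsFiniteMeasure μ] [IsFiniteMeasure ν]

lemma Icc_toReal_le
    (hsch : ∀ f : SchwartzMap ℝ ℂ, ∫ t, f t ∂μ = ∫ t, f t ∂ν)
    {a b : ℝ} (hab : a ≤ b) {ε : ℝ} (hε : 0 < ε) :
    (μ (Icc a b)).toReal ≤ (ν (Icc (a - ε) (b + ε))).toReal := by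
  set c : ℝ := (a + b) / 2 with hc
  set R : ℝ := (b - a) / 2 with hR
  have hR0 : 0 ≤ R := by rw [hR]; linarith
  set f : ContDiffBump c := ⟨R + ε/2, R + ε, by positivity, by linarith⟩ with hf
  have hone : ∀ x ∈ Icc a b, f x = 1 := by
    intro x hx
    apply f.one_of_mem_closedBall
    rw [Metric.mem_closedBall, Real.dist_eq]
    rw [mem_Icc] at hx
    rw [abs_le]
    have hin : f.rIn = R + ε/2 := rfl
    rw [hin]
    obtain ⟨hx1, hx2⟩ := hx
    constructor <;> linarith
  have hzero : ∀ x, x ∉ Icc (a - ε) (b + ε) → f x = 0 := by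
    intro x hx
    rw [← Function.notMem_support, f.support_eq]
    intro hmem
    rw [Metric.mem_ball, Real.dist_eq, abs_lt] at hmem
    apply hx
    rw [mem_Icc]
    obtain ⟨h1, h2⟩ := hmem
    have hout : f.rOut = R + ε := rfl
    rw [hout] at h1 h2
    constructor <;> linarith
  have hfint : ∀ (ρ : Measure ℝ) [IsFiniteMeasure ρ], Integrable (⇑f) ρ := fun ρ _ =>
    f.continuous.integrable_of_hasCompactSupport f.hasCompactSupport
  have hstep2 : ∫ t, f t ∂μ = ∫ t, f t ∂ν := by
    have h := hsch (bumpToSchwartz f)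
    have hcoe : ∀ (ρ : Measure ℝ), ∫ t, (bumpToSchwartz f) t ∂ρ
        = ((∫ t, f t ∂ρ : ℝ) : ℂ) := by
      intro ρ
      have h2 := integral_ofReal (𝕜 := ℂ) (f := fun t : ℝ => f t) (μ := ρ)
      exact h2
    rw [hcoe μ, hcoe ν] at h
    exact_mod_cast h
  have hstep1 : (μ (Icc a b)).toReal ≤ ∫ t, f t ∂μ := by
    rw [← measureReal_def, ← integral_indicator_one measurableSet_Icc]
    refine integral_mono ((integrable_const (1:ℝ)).indicator measurableSet_Icc)
      (hfint μ) fun x => ?_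
    by_cases hx : x ∈ Icc a b
    · rw [Set.indicator_of_mem hx, hone x hx, Pi.one_apply]
    · rw [Set.indicator_of_notMem hx]
      exact f.nonneg
  have hstep3 : ∫ t, f t ∂ν ≤ (ν (Icc (a - ε) (b + ε))).toReal := by
    rw [← measureReal_def, ← integral_indicator_one measurableSet_Icc]
    refine integral_mono (hfint ν)
      ((integrable_const (1:ℝ)).indicator measurableSet_Icc) fun x => ?_
    by_cases hx : x ∈ Icc (a - ε) (b + ε)
    · rw [Set.indicator_of_mem hx, Pi.one_apply]
      exact f.le_one
    · rw [Set.indicator_of_notMem hx, hzero x hx]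
  linarith

lemma Icc_le_of_schwartz
    (hsch : ∀ f : SchwartzMap ℝ ℂ, ∫ t, f t ∂μ = ∫ t, f t ∂ν) (a b : ℝ) :
    μ (Icc a b) ≤ ν (Icc a b) := by
  rcases le_or_gt a b with hab | hab
  · set s : ℕ → Set ℝ := fun n => Icc (a - 1/(n+1)) (b + 1/(n+1)) with hs
    have hanti : Antitone s := by
      intro n m hnm
      apply Icc_subset_Icc
      · have : 1/((m:ℝ)+1) ≤ 1/((n:ℝ)+1) := by
          apply one_div_le_one_div_of_le (by positivity)
          exact_mod_cast by omega
        linarith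
      · have : 1/((m:ℝ)+1) ≤ 1/((n:ℝ)+1) := by
          apply one_div_le_one_div_of_le (by positivity)
          exact_mod_cast by omega
        linarith
    have hInter : ⋂ n, s n = Icc a b := by
      ext x
      simp only [hs, mem_iInter, mem_Icc]
      constructor
      · intro h
        constructor
        · by_contra hax
          push_neg at hax
          obtain ⟨n, hn⟩ := exists_nat_one_div_lt (show (0:ℝ) < a - x by linarith)
          linarith [(h n).1]
        · by_contra hbx
          push_neg at hbx
          obtain ⟨n, hn⟩ := exists_nat_one_div_lt (show (0:ℝ) < x - b by linarith)
          linarith [(h n).2]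
      · intro h n
        have : (0:ℝ) < 1/((n:ℝ)+1) := by positivity
        constructor <;> linarith [h.1, h.2]
    have hle : ∀ n : ℕ, μ (Icc a b) ≤ ν (s n) := by
      intro n
      have h1 := Icc_toReal_le μ ν hsch hab (show (0:ℝ) < 1/((n:ℝ)+1) by positivity)
      exact (ENNReal.toReal_le_toReal (measure_ne_top μ _) (measure_ne_top ν _)).1 h1
    have htend := tendsto_measure_iInter_atTop
      (fun n => measurableSet_Icc.nullMeasurableSet) hanti ⟨0, measure_ne_top ν _⟩
    rw [hInter] at htend
    exact ge_of_tendsto' htend hle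
  · rw [Icc_eq_empty (by linarith)]
    simp

lemma measure_eq_of_schwartz
    (hsch : ∀ f : SchwartzMap ℝ ℂ, ∫ t, f t ∂μ = ∫ t, f t ∂ν) : μ = ν := by
  have hIcc : ∀ a b : ℝ, μ (Icc a b) = ν (Icc a b) := fun a b =>
    le_antisymm (Icc_le_of_schwartz μ ν hsch a b)
      (Icc_le_of_schwartz ν μ (fun f => (hsch f).symm) a b)
  apply Measure.ext_of_Iic
  intro x
  set s : ℕ → Set ℝ := fun n => Icc (x - n) x with hs
  have hmono : Monotone s := by
    intro n m hnm
    apply Icc_subset_Icc _ le_rfl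
    have : (n:ℝ) ≤ m := by exact_mod_cast hnm
    linarith
  have hU : ⋃ n, s n = Iic x := by
    ext t
    simp only [hs, mem_iUnion, mem_Icc, mem_Iic]
    constructor
    · rintro ⟨n, _, h2⟩; exact h2
    · intro h
      obtain ⟨n, hn⟩ := exists_nat_gt (x - t)
      exact ⟨n, by linarith, h⟩
  have h1 := tendsto_measure_iUnion_atTop (μ := μ) hmono
  have h2 := tendsto_measure_iUnion_atTop (μ := ν) hmono
  rw [hU] at h1 h2
  have heq : (⇑μ ∘ s) = (⇑ν ∘ s) := by
    funext n
    exact hIcc _ _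
  rw [heq] at h1
  exact tendsto_nhds_unique h1 h2
end meas

open MeasureTheory in
/-- **Determinacy of the moment problem for the square of a Gaussian variable.** Any two finite Borel measures on `ℝ` with
moments `π^{-1/2} ∫ x^{2n} e^{−x²} dx` are equal. -/
theorem gaussian_square_moment_problem_determinate
    (μ ν : Measure ℝ) (hμfin : IsFiniteMeasure μ) (hνfin : IsFiniteMeasure ν)
    (hμ : ∀ n : ℕ, ∫ t, t ^ n ∂μ = (Real.sqrt Real.pi)⁻¹ * ∫ x, x ^ (2 * n) * Real.exp (-x ^ 2))
    (hν : ∀ n : ℕ, ∫ t, t ^ n ∂ν = (Real.sqrt Real.pi)⁻¹ * ∫ x, x ^ (2 * n) * Real.exp (-x ^ 2)) :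
    μ = ν := by
  have hμ' : ∀ n : ℕ, ∫ t, t ^ n ∂μ = gm n := fun n => by unfold gm; exact hμ n
  have hν' : ∀ n : ℕ, ∫ t, t ^ n ∂ν = gm n := fun n => by unfold gm; exact hν n
  exact measure_eq_of_schwartz μ ν
    (fun f => integral_schwartz_eq μ ν (char_eq μ ν hμ' hν') f)
end

section
/- Indeterminacy of the moment problem for the cube of a Gaussian variable. There exist two distinct finite Borel measures μ ≠ ν on ℝ such that ∫_ℝ λⁿ dμ(λ) = π^{-1/2} ∫_ℝ x^{3n} e^{−x²} dx = ∫_ℝ λⁿ dν(λ) for every n ∈ ℕ. -/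
open MeasureTheory

noncomputable section GaussCubeSection

namespace GaussCubeAux

open Real Set Filter Asymptotics
open scoped Topology ENNReal NNReal

/-- the complex parameter `1 - √3 i` -/
def bc : ℂ := 1 - (Real.sqrt 3 : ℝ) * Complex.I

lemma bc_re : bc.re = 1 := by simp [bc]
lemma bc_ne : bc ≠ 0 := fun h => by simpa [bc_re] using congrArg Complex.re h

lemma sqrt3_sq : ((Real.sqrt 3 : ℝ) : ℂ) ^ 2 = 3 := by
  rw [← Complex.ofReal_pow, Real.sq_sqrt (by norm_num : (0:ℝ) ≤ 3)]
  norm_num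

lemma bc_cube : bc ^ 3 = -8 := by
  have h := sqrt3_sq
  rw [bc]
  linear_combination (((Real.sqrt 3:ℝ):ℂ) * Complex.I - 3) * h
    + (3*((Real.sqrt 3:ℝ):ℂ)^2 - ((Real.sqrt 3:ℝ):ℂ)^3*Complex.I) * Complex.I_sq

lemma norm_cexp (y : ℝ) : ‖Complex.exp (-bc * (y : ℂ) ^ 2)‖ = Real.exp (-y ^ 2) := by
  rw [Complex.norm_exp]
  congr 1
  simp [bc, Complex.mul_re, ← Complex.ofReal_pow]

lemma cexp_eq (y : ℝ) : Complex.exp (-bc * (y : ℂ) ^ 2)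
    = (Real.exp (-y ^ 2) * Real.cos (Real.sqrt 3 * y ^ 2) : ℝ)
      + (Real.exp (-y ^ 2) * Real.sin (Real.sqrt 3 * y ^ 2) : ℝ) * Complex.I := by
  have h : -bc * (y : ℂ) ^ 2 = ((-y ^ 2 : ℝ) : ℂ) + ((Real.sqrt 3 * y ^ 2 : ℝ) : ℂ) * Complex.I := by
    simp only [bc]; push_cast; ring
  rw [h, Complex.exp_add, Complex.exp_mul_I, ← Complex.ofReal_exp, ← Complex.ofReal_cos,
    ← Complex.ofReal_sin]
  push_cast
  ring

lemma integrable_pow_gauss (k : ℕ) : Integrable fun y : ℝ => |y| ^ k * Real.exp (-y ^ 2) := by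
  have h : IntegrableOn (fun y : ℝ => |y| ^ k * Real.exp (-y ^ 2)) (Ioi 0) := by
    refine ((integrableOn_rpow_mul_exp_neg_mul_sq one_pos
      (by exact lt_of_lt_of_le (by norm_num) (Nat.cast_nonneg k) : (-1:ℝ) < k)).congr_fun
      (fun x hx => ?_) measurableSet_Ioi)
    dsimp only
    rw [neg_one_mul, abs_of_pos hx, Real.rpow_natCast]
  rw [← integrableOn_univ, ← @Iio_union_Ici _ _ (0 : ℝ), integrableOn_union,
    integrableOn_Ici_iff_integrableOn_Ioi]
  refine ⟨?_, h⟩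
  rw [← (Measure.measurePreserving_neg (volume : Measure ℝ)).integrableOn_comp_preimage
      (Homeomorph.neg ℝ).measurableEmbedding]
  simp only [Function.comp_def, neg_sq, neg_preimage, neg_Iio, neg_neg, neg_zero, abs_neg]
  exact h

lemma integrable_bounded_gauss (k : ℕ) (g : ℝ → ℝ) (hc : Continuous g)
    (hb : ∀ y, |g y| ≤ 1) :
    Integrable fun y : ℝ => y ^ k * (Real.exp (-y ^ 2) * g y) := by
  refine (integrable_pow_gauss k).mono' (Continuous.aestronglyMeasurable (by continuity)) ?_
  filter_upwards with y
  rw [Real.norm_eq_abs, abs_mul, abs_mul, abs_pow, abs_of_nonneg (Real.exp_pos _).le]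
  have : Real.exp (-y^2) * |g y| ≤ Real.exp (-y^2) * 1 :=
    mul_le_mul_of_nonneg_left (hb y) (Real.exp_pos _).le
  calc |y|^k * (Real.exp (-y^2) * |g y|) ≤ |y|^k * (Real.exp (-y^2) * 1) := by
        exact mul_le_mul_of_nonneg_left this (by positivity)
    _ = |y|^k * Real.exp (-y^2) := by ring

lemma integrable_pow_gauss' (k : ℕ) : Integrable fun y : ℝ => y ^ k * Real.exp (-y ^ 2) := by
  simpa using integrable_bounded_gauss k (fun _ => 1) continuous_const (by norm_num)

lemma integral_odd_zero (f : ℝ → ℝ) (h : ∀ x, f (-x) = - f x) : ∫ x, f x = 0 := by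
  have h2 : ∫ x : ℝ, f (-x) = ∫ x : ℝ, f x := integral_neg_eq_self f _
  have h3 : ∫ x : ℝ, f (-x) = - ∫ x : ℝ, f x := by
    simp_rw [h]; exact integral_neg f
  linarith [h2.symm.trans h3]

/-- complex moments of order `2m` of the Gaussian-type weight `exp (-bc y²)` -/
def J (m : ℕ) : ℂ := ∫ y : ℝ, (y : ℂ) ^ (2 * m) * Complex.exp (-bc * (y : ℂ) ^ 2)
def Cc (m : ℕ) : ℝ := ∫ y : ℝ, y ^ (2 * m) * (Real.exp (-y ^ 2) * Real.cos (Real.sqrt 3 * y ^ 2))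
def Sc (m : ℕ) : ℝ := ∫ y : ℝ, y ^ (2 * m) * (Real.exp (-y ^ 2) * Real.sin (Real.sqrt 3 * y ^ 2))

lemma integrable_cos_gauss (k : ℕ) :
    Integrable fun y : ℝ => y ^ k * (Real.exp (-y ^ 2) * Real.cos (Real.sqrt 3 * y ^ 2)) :=
  integrable_bounded_gauss k _ (by continuity) (fun y => Real.abs_cos_le_one _)

lemma integrable_sin_gauss (k : ℕ) :
    Integrable fun y : ℝ => y ^ k * (Real.exp (-y ^ 2) * Real.sin (Real.sqrt 3 * y ^ 2)) :=
  integrable_bounded_gauss k _ (by continuity) (fun y => Real.abs_sin_le_one _)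

lemma integrable_cpow_gauss (k : ℕ) :
    Integrable fun y : ℝ => (y : ℂ) ^ k * Complex.exp (-bc * (y : ℂ) ^ 2) := by
  refine (integrable_pow_gauss k).mono' ?_ ?_
  · apply Continuous.aestronglyMeasurable
    exact (Complex.continuous_ofReal.pow k).mul
      ((continuous_const.mul (Complex.continuous_ofReal.pow 2)).cexp)
  · filter_upwards with y
    rw [norm_mul, norm_pow, norm_cexp, Complex.norm_real, Real.norm_eq_abs]

lemma J_eq (m : ℕ) : J m = (Cc m : ℂ) + (Sc m : ℂ) * Complex.I := by
  have key : ∀ y : ℝ, (y:ℂ)^(2*m) * Complex.exp (-bc*(y:ℂ)^2)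
      = ((y^(2*m) * (Real.exp (-y^2) * Real.cos (Real.sqrt 3*y^2)) : ℝ) : ℂ)
        + ((y^(2*m) * (Real.exp (-y^2) * Real.sin (Real.sqrt 3*y^2)) : ℝ) : ℂ) * Complex.I := by
    intro y; rw [cexp_eq]; push_cast; ring
  rw [J]
  simp_rw [key]
  have h1 : Integrable (fun y : ℝ =>
      ((y^(2*m) * (Real.exp (-y^2) * Real.cos (Real.sqrt 3*y^2)) : ℝ) : ℂ)) volume :=
    (integrable_cos_gauss (2*m)).ofReal
  have h2 : Integrable (fun y : ℝ =>
      ((y^(2*m) * (Real.exp (-y^2) * Real.sin (Real.sqrt 3*y^2)) : ℝ) : ℂ) * Complex.I) volume :=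
    ((integrable_sin_gauss (2*m)).ofReal).mul_const Complex.I
  rw [integral_add h1 h2, integral_mul_const]
  congr 1
  · exact Complex.ofRealCLM.integral_comp_comm (integrable_cos_gauss (2*m))
  · congr 1
    exact Complex.ofRealCLM.integral_comp_comm (integrable_sin_gauss (2*m))

lemma tendsto_cpow_gauss (k : ℕ) :
    Tendsto (fun y : ℝ => (y:ℂ) ^ k * Complex.exp (-bc * (y:ℂ) ^ 2)) atTop (𝓝 0) ∧
    Tendsto (fun y : ℝ => (y:ℂ) ^ k * Complex.exp (-bc * (y:ℂ) ^ 2)) atBot (𝓝 0) := by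
  have hnorm : ∀ y : ℝ, ‖(y:ℂ) ^ k * Complex.exp (-bc * (y:ℂ) ^ 2)‖
      = |y| ^ k * Real.exp (-y ^ 2) := by
    intro y
    rw [norm_mul, norm_pow, norm_cexp, Complex.norm_real, Real.norm_eq_abs]
  have htop : Tendsto (fun y : ℝ => |y| ^ k * Real.exp (-y ^ 2)) atTop (𝓝 0) := by
    have hlo := rpow_mul_exp_neg_mul_sq_isLittleO_exp_neg one_pos (k : ℝ)
    have h0 : Tendsto (fun x : ℝ => Real.exp (-(1/2) * x)) atTop (𝓝 0) := by
      apply Real.tendsto_exp_atBot.comp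
      exact Tendsto.const_mul_atTop_of_neg (by norm_num) tendsto_id
    have := hlo.isBigO.trans_tendsto h0
    apply this.congr'
    filter_upwards [eventually_ge_atTop (0:ℝ)] with y hy
    rw [neg_one_mul, abs_of_nonneg hy, Real.rpow_natCast]
  have hbot : Tendsto (fun y : ℝ => |y| ^ k * Real.exp (-y ^ 2)) atBot (𝓝 0) := by
    have := htop.comp tendsto_neg_atBot_atTop
    apply this.congr
    intro y; simp [Function.comp, abs_neg, neg_sq]
  constructor <;>
  · rw [tendsto_zero_iff_norm_tendsto_zero]
    simp_rw [hnorm]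
    first | exact htop | exact hbot

lemma J_rec (m : ℕ) : 2 * bc * J (m + 1) = (2 * (m : ℂ) + 1) * J m := by
  set F : ℝ → ℂ := fun y => (y:ℂ) ^ (2*m+1) * Complex.exp (-bc * (y:ℂ) ^ 2) with hF
  set F' : ℝ → ℂ := fun y => (2*(m:ℂ)+1) * ((y:ℂ) ^ (2*m) * Complex.exp (-bc * (y:ℂ) ^ 2))
      - 2 * bc * ((y:ℂ) ^ (2*m+2) * Complex.exp (-bc * (y:ℂ) ^ 2)) with hF'
  have hd : ∀ y : ℝ, HasDerivAt F (F' y) y := by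
    intro y
    have A : ∀ z : ℂ, HasDerivAt (fun z : ℂ => z ^ (2*m+1) * Complex.exp (-bc * z ^ 2))
        ((2*(m:ℂ)+1) * (z ^ (2*m) * Complex.exp (-bc * z ^ 2))
          - 2 * bc * (z ^ (2*m+2) * Complex.exp (-bc * z ^ 2))) z := by
      intro z
      have h1 := hasDerivAt_pow (2*m+1) z
      have h2 := ((hasDerivAt_pow 2 z).const_mul (-bc)).cexp
      refine (h1.mul h2).congr_deriv ?_
      push_cast
      ring
    exact (A y).comp_ofReal
  have hInt : Integrable F' := by
    exact (((integrable_cpow_gauss (2*m)).const_mul _).sub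
      ((integrable_cpow_gauss (2*m+2)).const_mul _))
  have htop : Tendsto F atTop (𝓝 0) := (tendsto_cpow_gauss (2*m+1)).1
  have hbot : Tendsto F atBot (𝓝 0) := (tendsto_cpow_gauss (2*m+1)).2
  have hIic := integral_Iic_of_hasDerivAt_of_tendsto' (a := 0) (fun x _ => hd x)
    hInt.integrableOn hbot
  have hIoi := integral_Ioi_of_hasDerivAt_of_tendsto' (a := 0) (fun x _ => hd x)
    hInt.integrableOn htop
  have hsum : ∫ y : ℝ, F' y = 0 := by
    rw [← intervalIntegral.integral_Iic_add_Ioi hInt.integrableOn hInt.integrableOn, hIic, hIoi]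
    ring
  have hsplit : ∫ y : ℝ, F' y
      = (2*(m:ℂ)+1) * J m - 2 * bc * J (m+1) := by
    rw [hF']
    rw [integral_sub (((integrable_cpow_gauss (2*m)).const_mul _))
      (((integrable_cpow_gauss (2*m+2)).const_mul _)), integral_const_mul, integral_const_mul]
    rw [J, J]
    norm_num [show 2*(m+1) = 2*m+2 from by ring]
  rw [hsplit] at hsum
  linear_combination -hsum

lemma J_sq : (J 0) ^ 2 = (Real.pi : ℂ) / bc := by
  have h : 0 < bc.re := by rw [bc_re]; norm_num
  have h2 := integral_gaussian_sq_complex h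
  rw [J]
  simp only [Nat.mul_zero, pow_zero, one_mul]
  exact h2

lemma C0_eq : Cc 0 = Real.sqrt 3 * Sc 0 := by
  have hsq := J_sq
  rw [J_eq 0] at hsq
  have hmul : ((Cc 0 : ℂ) + (Sc 0 : ℂ) * Complex.I) ^ 2 * bc = (Real.pi : ℂ) := by
    rw [hsq, div_mul_cancel₀ _ bc_ne]
  have hexp : ((Cc 0 : ℂ) + (Sc 0 : ℂ) * Complex.I) ^ 2 * bc
      = ((Cc 0 ^ 2 - Sc 0 ^ 2 + 2 * Real.sqrt 3 * Cc 0 * Sc 0 : ℝ) : ℂ)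
        + ((2 * Cc 0 * Sc 0 - Real.sqrt 3 * (Cc 0 ^ 2 - Sc 0 ^ 2) : ℝ) : ℂ) * Complex.I := by
    rw [bc]
    push_cast
    linear_combination ((Sc 0:ℂ)^2 - 2*((Real.sqrt 3:ℝ):ℂ)*(Cc 0:ℂ)*(Sc 0:ℂ)
      - ((Real.sqrt 3:ℝ):ℂ)*(Sc 0:ℂ)^2*Complex.I) * Complex.I_sq
  rw [hexp] at hmul
  rw [Complex.ext_iff] at hmul
  simp only [Complex.add_re, Complex.add_im, Complex.mul_I_re, Complex.mul_I_im,
    Complex.ofReal_re, Complex.ofReal_im, neg_zero, add_zero, zero_add] at hmul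
  obtain ⟨hre, him⟩ := hmul
  have h3 : Real.sqrt 3 ^ 2 = 3 := Real.sq_sqrt (by norm_num)
  have hq : Cc 0 ^ 2 - Sc 0 ^ 2 = Real.pi / 4 := by
    linear_combination (1/4)*hre - (Real.sqrt 3/4)*him - ((Cc 0^2 - Sc 0^2)/4)*h3
  have hfac : (Real.sqrt 3 * Cc 0 + Sc 0) * (Cc 0 - Real.sqrt 3 * Sc 0) = 0 := by
    linear_combination -him - Cc 0 * Sc 0 * h3
  rcases mul_eq_zero.1 hfac with hcase | hcase
  · exfalso
    have hS : Sc 0 = - (Real.sqrt 3 * Cc 0) := by linarith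
    rw [hS] at hq
    nlinarith [Real.pi_pos, sq_nonneg (Cc 0), h3]
  · linarith

lemma J_triple (k : ℕ) : ∃ r : ℝ, J (3 * k) = (r : ℂ) * J 0 := by
  induction k with
  | zero => exact ⟨1, by norm_num⟩
  | succ n ih =>
    obtain ⟨r, hr⟩ := ih
    refine ⟨-((2*(3*(n:ℝ))+1) * (2*(3*(n:ℝ))+3) * (2*(3*(n:ℝ))+5))/64 * r, ?_⟩
    have h1 := J_rec (3 * n)
    have h2 := J_rec (3 * n + 1)
    have h3 := J_rec (3 * n + 2)
    have e1 : (3:ℕ) * n + 1 + 1 = 3*n+2 := by ring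
    have e2 : (3:ℕ) * n + 2 + 1 = 3*(n+1) := by ring
    rw [e1] at h2
    rw [e2] at h3
    have hb3 : (2*bc) * ((2*bc) * (2*bc)) = -64 := by
      have := bc_cube
      linear_combination 8 * this
    have hchain : (-64 : ℂ) * J (3*(n+1))
        = (2*(3*(n:ℂ))+5) * ((2*(3*(n:ℂ))+3) * ((2*(3*(n:ℂ))+1) * J (3*n))) := by
      push_cast at h1 h2 h3 ⊢
      calc (-64 : ℂ) * J (3*(n+1)) = (2*bc) * ((2*bc) * (2*bc * J (3*(n+1)))) := by
            rw [show (2*bc) * ((2*bc) * (2*bc * J (3*(n+1))))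
              = ((2*bc) * ((2*bc) * (2*bc))) * J (3*(n+1)) from by ring, hb3]
        _ = (2*bc) * ((2*bc) * ((2*(3*(n:ℂ)+2)+1) * J (3*n+2))) := by rw [h3]
        _ = (2*(3*(n:ℂ)+2)+1) * ((2*bc) * ((2*bc) * J (3*n+2))) := by ring
        _ = (2*(3*(n:ℂ)+2)+1) * ((2*bc) * ((2*(3*(n:ℂ)+1)+1) * J (3*n+1))) := by rw [h2]
        _ = (2*(3*(n:ℂ)+2)+1) * ((2*(3*(n:ℂ)+1)+1) * (2*bc * J (3*n+1))) := by ring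
        _ = (2*(3*(n:ℂ)+2)+1) * ((2*(3*(n:ℂ)+1)+1) * ((2*(3*(n:ℂ))+1) * J (3*n))) := by rw [h1]
        _ = (2*(3*(n:ℂ))+5) * ((2*(3*(n:ℂ))+3) * ((2*(3*(n:ℂ))+1) * J (3*n))) := by ring
    have : J (3*(n+1))
        = ((-((2*(3*(n:ℝ))+1) * (2*(3*(n:ℝ))+3) * (2*(3*(n:ℝ))+5))/64 * r : ℝ) : ℂ) * J 0 := by
      have h64 : (-64 : ℂ) ≠ 0 := by norm_num
      field_simp at hchain ⊢
      rw [hr] at hchain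
      push_cast
      linear_combination (-1/64 : ℂ) * hchain
    exact this

lemma key (k : ℕ) : Cc (3 * k) = Real.sqrt 3 * Sc (3 * k) := by
  obtain ⟨r, hr⟩ := J_triple k
  rw [J_eq, J_eq] at hr
  have h1 : Cc (3 * k) = r * Cc 0 := by
    have := congrArg Complex.re hr
    simpa using this
  have h2 : Sc (3 * k) = r * Sc 0 := by
    have := congrArg Complex.im hr
    simpa using this
  rw [h1, h2, C0_eq]; ring

/-- the crucial vanishing integral -/
lemma perturb_zero (n : ℕ) :
    ∫ y : ℝ, y ^ (3 * n) * (Real.exp (-y ^ 2)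
      * Real.sin (Real.sqrt 3 * y ^ 2 - Real.pi / 6)) = 0 := by
  rcases Nat.even_or_odd n with he | ho
  · obtain ⟨k, hk⟩ := he
    have h3k : 3 * n = 2 * (3 * k) := by omega
    rw [h3k]
    have hs : ∀ y : ℝ, Real.sin (Real.sqrt 3 * y ^ 2 - Real.pi / 6)
        = (Real.sqrt 3 / 2) * Real.sin (Real.sqrt 3 * y ^ 2)
          - (1/2) * Real.cos (Real.sqrt 3 * y ^ 2) := by
      intro y
      rw [Real.sin_sub, Real.sin_pi_div_six, Real.cos_pi_div_six]
      ring
    have hpt : ∀ y : ℝ, y ^ (2*(3*k)) * (Real.exp (-y ^ 2)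
          * Real.sin (Real.sqrt 3 * y ^ 2 - Real.pi / 6))
        = (Real.sqrt 3 / 2) * (y ^ (2*(3*k)) * (Real.exp (-y^2) * Real.sin (Real.sqrt 3 * y^2)))
          - (1/2) * (y ^ (2*(3*k)) * (Real.exp (-y^2) * Real.cos (Real.sqrt 3 * y^2))) := by
      intro y; rw [hs]; ring
    simp_rw [hpt]
    rw [integral_sub ((integrable_bounded_gauss _ _ (by continuity)
        (fun y => Real.abs_sin_le_one _)).const_mul _)
      ((integrable_bounded_gauss _ _ (by continuity)
        (fun y => Real.abs_cos_le_one _)).const_mul _),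
      integral_const_mul, integral_const_mul]
    have := key k
    rw [← Sc, ← Cc, this]
    ring
  · apply integral_odd_zero
    intro x
    have hodd : (-x) ^ (3*n) = - x ^ (3*n) := by
      rcases ho with ⟨j, hj⟩
      rw [Odd.neg_pow ⟨3*j+1, by omega⟩]
    rw [hodd, neg_pow, neg_sq]
    ring_nf

/-! ### The two measures -/

def ρ0 (y : ℝ) : ℝ := (Real.sqrt Real.pi)⁻¹ * Real.exp (-y ^ 2)
def per (y : ℝ) : ℝ := Real.sin (Real.sqrt 3 * y ^ 2 - Real.pi / 6)
def ρ1 (y : ℝ) : ℝ := ρ0 y * (1 + per y)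

lemma ρ0_cont : Continuous ρ0 := by unfold ρ0; continuity
lemma per_cont : Continuous per := by unfold per; continuity
lemma ρ1_cont : Continuous ρ1 := ρ0_cont.mul (continuous_const.add per_cont)
lemma ρ0_pos (y : ℝ) : 0 < ρ0 y := by
  unfold ρ0
  positivity
lemma ρ0_nonneg (y : ℝ) : 0 ≤ ρ0 y := (ρ0_pos y).le
lemma per_abs (y : ℝ) : |per y| ≤ 1 := Real.abs_sin_le_one _
lemma ρ1_nonneg (y : ℝ) : 0 ≤ ρ1 y := by
  have := abs_le.1 (per_abs y)
  unfold ρ1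
  have h1 : 0 ≤ 1 + per y := by linarith [this.1]
  exact mul_nonneg (ρ0_nonneg y) h1

lemma ρ0_integrable : Integrable ρ0 := by
  have := (integrable_pow_gauss' 0).const_mul (Real.sqrt Real.pi)⁻¹
  unfold ρ0
  simpa using this

lemma ρ1_integrable : Integrable ρ1 := by
  have h := (integrable_bounded_gauss 0 per per_cont per_abs).const_mul (Real.sqrt Real.pi)⁻¹
  have h2 : Integrable fun y : ℝ => ρ0 y * per y := by
    simpa [ρ0, mul_assoc] using h
  apply (ρ0_integrable.add h2).congr
  filter_upwards with y
  simp only [Pi.add_apply, ρ1]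
  ring

def γ0 : Measure ℝ := volume.withDensity fun y => ENNReal.ofReal (ρ0 y)
def γ1 : Measure ℝ := volume.withDensity fun y => ENNReal.ofReal (ρ1 y)

instance : IsFiniteMeasure γ0 := isFiniteMeasure_withDensity_ofReal ρ0_integrable.2
instance : IsFiniteMeasure γ1 := isFiniteMeasure_withDensity_ofReal ρ1_integrable.2
instance : IsFiniteMeasure (γ0.map (fun y : ℝ => y ^ 3)) := by
  apply Measure.isFiniteMeasure_map
instance : IsFiniteMeasure (γ1.map (fun y : ℝ => y ^ 3)) := by
  apply Measure.isFiniteMeasure_map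

lemma moment_map (ρ : ℝ → ℝ) (hm : Measurable ρ) (h0 : ∀ y, 0 ≤ ρ y) (n : ℕ) :
    ∫ t, t ^ n ∂((volume.withDensity fun y => ENNReal.ofReal (ρ y)).map (fun y : ℝ => y ^ 3))
      = ∫ y : ℝ, ρ y * (y ^ 3) ^ n := by
  rw [integral_map (f := fun t : ℝ => t ^ n)
    (Measurable.aemeasurable (by measurability : Measurable (fun y : ℝ => y ^ 3)))
    (Continuous.aestronglyMeasurable (by continuity))]
  rw [show (fun y : ℝ => ENNReal.ofReal (ρ y))
      = fun y => ((Real.toNNReal (ρ y) : ℝ≥0) : ℝ≥0∞) from rfl]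
  rw [integral_withDensity_eq_integral_smul (hm.real_toNNReal)]
  congr 1
  ext y
  simp [NNReal.smul_def, Real.coe_toNNReal _ (h0 y)]

lemma moments_μ (n : ℕ) :
    ∫ t, t ^ n ∂(γ0.map (fun y : ℝ => y ^ 3))
      = (Real.sqrt Real.pi)⁻¹ * ∫ x : ℝ, x ^ (3 * n) * Real.exp (-x ^ 2) := by
  rw [γ0, moment_map ρ0 (ρ0_cont.measurable) ρ0_nonneg n]
  rw [← integral_const_mul]
  congr 1
  ext y
  rw [ρ0, ← pow_mul]
  ring

lemma moments_ν (n : ℕ) :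
    ∫ t, t ^ n ∂(γ1.map (fun y : ℝ => y ^ 3))
      = (Real.sqrt Real.pi)⁻¹ * ∫ x : ℝ, x ^ (3 * n) * Real.exp (-x ^ 2) := by
  rw [γ1, moment_map ρ1 (ρ1_cont.measurable) ρ1_nonneg n]
  have hpt : ∀ y : ℝ, ρ1 y * (y ^ 3) ^ n
      = (Real.sqrt Real.pi)⁻¹ * (y ^ (3*n) * Real.exp (-y^2))
        + (Real.sqrt Real.pi)⁻¹ * (y ^ (3*n) * (Real.exp (-y^2) * per y)) := by
    intro y
    rw [ρ1, ρ0, ← pow_mul]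
    ring
  simp_rw [hpt]
  rw [integral_add ((integrable_pow_gauss' (3*n)).const_mul _)
    ((integrable_bounded_gauss (3*n) per per_cont per_abs).const_mul _),
    integral_const_mul, integral_const_mul]
  have hz : ∫ y : ℝ, y ^ (3*n) * (Real.exp (-y^2) * per y) = 0 := by
    simp_rw [per]; exact perturb_zero n
  rw [hz]
  ring

lemma per_pos_on {y : ℝ} (hy : y ∈ Ioo (3/5 : ℝ) (7/5 : ℝ)) : 0 < per y := by
  obtain ⟨h1, h2⟩ := hy
  have hs3l : (1.7 : ℝ) < Real.sqrt 3 := by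
    rw [show (3:ℝ) = 1.7^2 + 0.11 from by norm_num]
    have := Real.sqrt_lt_sqrt (by positivity : (0:ℝ) ≤ 1.7^2)
      (by norm_num : (1.7:ℝ)^2 < 1.7^2 + 0.11)
    rwa [Real.sqrt_sq (by norm_num : (0:ℝ) ≤ 1.7)] at this
  have hs3u : Real.sqrt 3 < 1.74 := by
    rw [show (1.74:ℝ) = Real.sqrt (1.74^2) from (Real.sqrt_sq (by norm_num)).symm]
    exact Real.sqrt_lt_sqrt (by norm_num) (by norm_num)
  have hy2l : (9/25 : ℝ) < y ^ 2 := by nlinarith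
  have hy2u : y ^ 2 < 49/25 := by nlinarith
  have hπu := Real.pi_lt_d2
  have hπl := Real.pi_gt_d6
  apply Real.sin_pos_of_pos_of_lt_pi
  · nlinarith
  · nlinarith

lemma measures_ne : γ0.map (fun y : ℝ => y ^ 3) ≠ γ1.map (fun y : ℝ => y ^ 3) := by
  intro h
  have hmono : StrictMono (fun y : ℝ => y ^ 3) := Odd.strictMono_pow (by decide)
  have hpre : (fun y : ℝ => y ^ 3) ⁻¹' (Ioo ((3/5:ℝ)^3) ((7/5:ℝ)^3)) = Ioo (3/5 : ℝ) (7/5 : ℝ) := by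
    ext y
    simp only [mem_preimage, mem_Ioo]
    constructor
    · rintro ⟨ha, hb⟩
      exact ⟨hmono.lt_iff_lt.mp ha, hmono.lt_iff_lt.mp hb⟩
    · rintro ⟨ha, hb⟩
      exact ⟨hmono ha, hmono hb⟩
  have hmeas : Measurable (fun y : ℝ => y ^ 3) := by measurability
  have happ := congrArg (fun m : Measure ℝ => m (Ioo ((3/5:ℝ)^3) ((7/5:ℝ)^3))) h
  rw [Measure.map_apply hmeas measurableSet_Ioo, Measure.map_apply hmeas measurableSet_Ioo,
    hpre] at happ
  rw [γ0, γ1, withDensity_apply _ measurableSet_Ioo, withDensity_apply _ measurableSet_Ioo] at happ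
  have h0 : ∫⁻ y in Ioo (3/5:ℝ) (7/5:ℝ), ENNReal.ofReal (ρ0 y)
      = ENNReal.ofReal (∫ y in Ioo (3/5:ℝ) (7/5:ℝ), ρ0 y) := by
    rw [← ofReal_integral_eq_lintegral_ofReal ρ0_integrable.restrict
      (ae_of_all _ ρ0_nonneg)]
  have h1 : ∫⁻ y in Ioo (3/5:ℝ) (7/5:ℝ), ENNReal.ofReal (ρ1 y)
      = ENNReal.ofReal (∫ y in Ioo (3/5:ℝ) (7/5:ℝ), ρ1 y) := by
    rw [← ofReal_integral_eq_lintegral_ofReal ρ1_integrable.restrict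
      (ae_of_all _ ρ1_nonneg)]
  rw [h0, h1] at happ
  have heq : ∫ y in Ioo (3/5:ℝ) (7/5:ℝ), ρ0 y = ∫ y in Ioo (3/5:ℝ) (7/5:ℝ), ρ1 y := by
    exact (ENNReal.ofReal_eq_ofReal_iff
      (setIntegral_nonneg measurableSet_Ioo (fun y _ => ρ0_nonneg y))
      (setIntegral_nonneg measurableSet_Ioo (fun y _ => ρ1_nonneg y))).mp happ
  have hlt : ∫ y in Ioo (3/5:ℝ) (7/5:ℝ), ρ0 y < ∫ y in Ioo (3/5:ℝ) (7/5:ℝ), ρ1 y := by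
    have hpos : 0 < ∫ y in (3/5:ℝ)..(7/5:ℝ), (ρ1 y - ρ0 y) := by
      apply intervalIntegral.intervalIntegral_pos_of_pos_on
      · exact ((ρ1_integrable.sub ρ0_integrable).intervalIntegrable)
      · intro x hx
        have := per_pos_on hx
        have := ρ0_pos x
        simp only [ρ1]
        nlinarith
      · norm_num
    rw [intervalIntegral.integral_of_le (by norm_num : (3/5:ℝ) ≤ 7/5),
      integral_Ioc_eq_integral_Ioo] at hpos
    rw [integral_sub (ρ1_integrable.restrict) (ρ0_integrable.restrict)] at hpos
    linarith
  rw [heq] at hlt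
  exact lt_irrefl _ hlt

end GaussCubeAux

end GaussCubeSection

/-- **Indeterminacy of the moment problem for the cube of a Gaussian variable.**
There exist two distinct finite Borel measures on `ℝ` whose moments are all equal to
`π^{-1/2} ∫ x^{3n} e^{−x²} dx`. -/
theorem gaussian_cube_moment_problem_indeterminate :
    ∃ μ ν : Measure ℝ, IsFiniteMeasure μ ∧ IsFiniteMeasure ν ∧ μ ≠ ν ∧
      (∀ n : ℕ, ∫ t, t ^ n ∂μ = (Real.sqrt Real.pi)⁻¹ * ∫ x, x ^ (3 * n) * Real.exp (-x ^ 2)) ∧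
      (∀ n : ℕ, ∫ t, t ^ n ∂ν = (Real.sqrt Real.pi)⁻¹ * ∫ x, x ^ (3 * n) * Real.exp (-x ^ 2)) := by
  exact ⟨GaussCubeAux.γ0.map (fun y : ℝ => y ^ 3), GaussCubeAux.γ1.map (fun y : ℝ => y ^ 3),
    inferInstance, inferInstance, GaussCubeAux.measures_ne,
    GaussCubeAux.moments_μ, GaussCubeAux.moments_ν⟩
end

section
/- A parallelogram law with directional continuity yields a seminorm and a semi-inner product. Let X be a vector space over ℂ and p : X → [0, +∞) a function such that: (i) p(λx) = |λ|·p(x) for every λ ∈ ℂ and x ∈ X; (ii) p(x+y)² + p(x−y)² = 2(p(x)² + p(y)²) for all x, y ∈ X; (iii) for every fixed x, y ∈ X, p(x + t·y) → p(x) as the real parameter t → 0⁺. Then p is a seminorm on X (in particular p(x+y) ≤ p(x) + p(y) for all x, y), and the map B(x, y) := (1/4)·∑_{k=0}^{3} (−i)^k · p(x + i^k y)² is a positive semidefinite Hermitian sesquilinear form on X: B(x, x) = p(x)² ≥ 0, B(x, y) = conj(B(y, x)), B(x, y+z) = B(x, y) + B(x, z), and B(x, λy) = λ·B(x, y) for all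 x, y, z ∈ X and λ ∈ ℂ; moreover B is the unique positive semidefinite Hermitian sesquilinear form with B(x, x) = p(x)² for all x. -/
/-!
The real part `polarRe p x y = (p (x + y)² - p (x - y)²) / 4` of the polarization formula is
additive in `y` by the parallelogram law (Jordan–von Neumann), and directional continuity, which
is automatically two-sided, makes it `ℝ`-linear. Then `t ↦ p (x + t y)² = p x² + 2t polarRe p x y
+ t² p y²` is a nonnegative quadratic, so its discriminant gives Cauchy–Schwarz and hence the
triangle inequality. Since `p` is invariant under multiplication by `i`, the full polarization
form is `polarRe p x y - i polarRe p x (i y)`, which is then Hermitian and `ℂ`-linear in `y`.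
Uniqueness is the polarization identity, valid for every Hermitian sesquilinear form.
-/

noncomputable def polarForm {X : Type*} [AddCommGroup X] [Module ℂ X]
    (p : X → ℝ) (x y : X) : ℂ :=
  (1 / 4 : ℂ) * ∑ k ∈ Finset.range 4,
    (-Complex.I) ^ k * ((p (x + (Complex.I ^ k) • y) : ℂ)) ^ 2

open Filter Topology
open Complex ComplexConjugate

noncomputable def polarRe {X : Type*} [AddCommGroup X] (p : X → ℝ) (x y : X) : ℝ :=
  (p (x + y) ^ 2 - p (x - y) ^ 2) / 4

section Real

variable {X : Type*} [AddCommGroup X] {p : X → ℝ}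

theorem sq_add_eq_of_parallelogram
    (hpar : ∀ x y : X, p (x + y) ^ 2 + p (x - y) ^ 2 = 2 * (p x ^ 2 + p y ^ 2)) (x y : X) :
    p (x + y) ^ 2 = p x ^ 2 + p y ^ 2 + 2 * polarRe p x y := by
  have := hpar x y
  unfold polarRe
  linarith

theorem polarRe_comm (hneg : ∀ x : X, p (-x) = p x) (x y : X) :
    polarRe p x y = polarRe p y x := by
  rw [polarRe, polarRe, add_comm x y, ← neg_sub y x, hneg]

theorem polarRe_zero_right (x : X) : polarRe p x 0 = 0 := by
  simp [polarRe]

theorem polarRe_neg_right (x y : X) : polarRe p x (-y) = -polarRe p x y := by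
  rw [polarRe, polarRe, ← sub_eq_add_neg, sub_neg_eq_add]
  ring

theorem polarRe_add_right_add_polarRe_sub_right
    (hpar : ∀ x y : X, p (x + y) ^ 2 + p (x - y) ^ 2 = 2 * (p x ^ 2 + p y ^ 2)) (x u v : X) :
    polarRe p x (u + v) + polarRe p x (u - v) = 2 * polarRe p x u := by
  have h₁ := hpar (x + u) v
  have h₂ := hpar (x - u) v
  rw [polarRe, polarRe, polarRe, show x + (u + v) = x + u + v by abel,
    show x - (u + v) = x - u - v by abel, show x + (u - v) = x + u - v by abel,
    show x - (u - v) = x - u + v by abel]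
  linarith

theorem polarRe_add_right [Module ℝ X]
    (hpar : ∀ x y : X, p (x + y) ^ 2 + p (x - y) ^ 2 = 2 * (p x ^ 2 + p y ^ 2)) (x y z : X) :
    polarRe p x (y + z) = polarRe p x y + polarRe p x z := by
  set u : X := (2⁻¹ : ℝ) • (y + z)
  have h₁ := polarRe_add_right_add_polarRe_sub_right hpar x u ((2⁻¹ : ℝ) • (y - z))
  have h₂ := polarRe_add_right_add_polarRe_sub_right hpar x u u
  rw [show u + (2⁻¹ : ℝ) • (y - z) = y by module, show u - (2⁻¹ : ℝ) • (y - z) = z by module]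
    at h₁
  rw [show u + u = y + z by module, sub_self, polarRe_zero_right] at h₂
  linarith

theorem continuousAt_line_of_tendsto_nhdsGT [Module ℝ X]
    (hcont : ∀ x y : X, Tendsto (fun t : ℝ => p (x + t • y)) (𝓝[>] 0) (𝓝 (p x))) (x y : X) :
    ContinuousAt (fun t : ℝ => p (x + t • y)) 0 := by
  refine continuousAt_iff_continuous_left'_right'.2 ⟨?_, ?_⟩ <;>
    simp only [ContinuousWithinAt, zero_smul, add_zero]
  · have hneg : Tendsto Neg.neg (𝓝[<] (0 : ℝ)) (𝓝[>] 0) := by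
      simpa using tendsto_neg_nhdsLT (a := (0 : ℝ))
    simpa [Function.comp_def] using (hcont x (-y)).comp hneg
  · exact hcont x y

theorem polarRe_smul_right [Module ℝ X]
    (hpar : ∀ x y : X, p (x + y) ^ 2 + p (x - y) ^ 2 = 2 * (p x ^ 2 + p y ^ 2))
    (hcont : ∀ x y : X, Tendsto (fun t : ℝ => p (x + t • y)) (𝓝[>] 0) (𝓝 (p x)))
    (x y : X) (t : ℝ) :
    polarRe p x (t • y) = t * polarRe p x y := by
  let F : ℝ →+ ℝ := AddMonoidHom.mk' (fun s => polarRe p x (s • y)) fun a b => by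
    simp only [add_smul, polarRe_add_right hpar]
  have hF : Continuous F := by
    refine continuous_of_tendsto_nhds_zero F ?_
    have h := (((continuousAt_line_of_tendsto_nhdsGT hcont x y).pow 2).sub
      ((continuousAt_line_of_tendsto_nhdsGT hcont x (-y)).pow 2)).div_const 4
    simpa [F, polarRe, ContinuousAt, sub_eq_add_neg] using h
  simpa [F] using map_real_smul F hF t 1

theorem polarRe_le_mul [Module ℝ X] (hp0 : ∀ x, 0 ≤ p x)
    (hhom : ∀ (t : ℝ) (x : X), p (t • x) = |t| * p x)
    (hpar : ∀ x y : X, p (x + y) ^ 2 + p (x - y) ^ 2 = 2 * (p x ^ 2 + p y ^ 2))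
    (hcont : ∀ x y : X, Tendsto (fun t : ℝ => p (x + t • y)) (𝓝[>] 0) (𝓝 (p x)))
    (x y : X) :
    polarRe p x y ≤ p x * p y := by
  have hquad : ∀ t : ℝ, 0 ≤ p y ^ 2 * (t * t) + 2 * polarRe p x y * t + p x ^ 2 := fun t => by
    have h := sq_add_eq_of_parallelogram hpar x (t • y)
    rw [hhom, polarRe_smul_right hpar hcont, mul_pow, sq_abs] at h
    nlinarith [sq_nonneg (p (x + t • y))]
  have hdisc := discrim_le_zero hquad
  rw [discrim] at hdisc
  nlinarith [mul_nonneg (hp0 x) (hp0 y)]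

theorem add_le_of_parallelogram [Module ℝ X] (hp0 : ∀ x, 0 ≤ p x)
    (hhom : ∀ (t : ℝ) (x : X), p (t • x) = |t| * p x)
    (hpar : ∀ x y : X, p (x + y) ^ 2 + p (x - y) ^ 2 = 2 * (p x ^ 2 + p y ^ 2))
    (hcont : ∀ x y : X, Tendsto (fun t : ℝ => p (x + t • y)) (𝓝[>] 0) (𝓝 (p x)))
    (x y : X) :
    p (x + y) ≤ p x + p y := by
  have hsq := sq_add_eq_of_parallelogram hpar x y
  have hcs := polarRe_le_mul hp0 hhom hpar hcont x y
  nlinarith [hp0 (x + y), hp0 x, hp0 y]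

end Real

section Complex

variable {X : Type*} [AddCommGroup X] [Module ℂ X] {p : X → ℝ}

theorem polarForm_eq_polarRe (x y : X) :
    polarForm p x y = polarRe p x y - I * polarRe p x (I • y) := by
  have hnegI3 : (-I) ^ 3 = I := by rw [neg_pow, I_pow_three]; ring
  simp only [polarForm, polarRe, Finset.sum_range_succ, Finset.sum_range_zero, pow_zero, pow_one,
    neg_sq, I_sq, I_pow_three, hnegI3, one_smul, neg_smul, ← sub_eq_add_neg]
  push_cast
  ring

theorem polarRe_I_smul_right_comm (hneg : ∀ x : X, p (-x) = p x)
    (hI : ∀ x : X, p (I • x) = p x) (x y : X) :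
    polarRe p y (I • x) = -polarRe p x (I • y) := by
  have h₁ : y + I • x = I • (x - I • y) := by
    rw [smul_sub, smul_smul, I_mul_I, neg_one_smul]; abel
  have h₂ : y - I • x = -(I • (x + I • y)) := by
    rw [smul_add, smul_smul, I_mul_I, neg_one_smul]; abel
  rw [polarRe, polarRe, h₁, h₂, hI, hneg, hI]
  ring

theorem polarForm_conj (hneg : ∀ x : X, p (-x) = p x) (hI : ∀ x : X, p (I • x) = p x)
    (x y : X) : polarForm p x y = conj (polarForm p y x) := by
  rw [polarForm_eq_polarRe, polarForm_eq_polarRe, polarRe_comm hneg y x,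
    polarRe_I_smul_right_comm hneg hI x y, map_sub, map_mul, conj_I, conj_ofReal,
    conj_ofReal]
  push_cast
  ring

theorem polarForm_self (hhom : ∀ (z : ℂ) (x : X), p (z • x) = ‖z‖ * p x) (x : X) :
    polarForm p x x = (p x : ℂ) ^ 2 := by
  have hre : polarRe p x x = p x ^ 2 := by
    have h₀ : p 0 = 0 := by simpa using hhom 0 0
    rw [polarRe, sub_self, h₀, ← two_smul ℂ x, hhom, Complex.norm_two]
    ring
  have him : polarRe p x (I • x) = 0 := by
    have hplus : ‖1 + I‖ ^ 2 = 2 := by rw [Complex.sq_norm]; norm_num [normSq_apply]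
    have hminus : ‖1 - I‖ ^ 2 = 2 := by rw [Complex.sq_norm]; norm_num [normSq_apply]
    rw [polarRe, show x + I • x = (1 + I) • x by rw [add_smul, one_smul],
      show x - I • x = (1 - I) • x by rw [sub_smul, one_smul], hhom, hhom, mul_pow, mul_pow,
      hplus, hminus]
    ring
  rw [polarForm_eq_polarRe, hre, him]
  push_cast
  ring

theorem polarForm_add_right
    (hpar : ∀ x y : X, p (x + y) ^ 2 + p (x - y) ^ 2 = 2 * (p x ^ 2 + p y ^ 2)) (x y z : X) :
    polarForm p x (y + z) = polarForm p x y + polarForm p x z := by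
  simp only [polarForm_eq_polarRe, smul_add, polarRe_add_right hpar]
  push_cast
  ring

theorem polarForm_I_smul_right (x y : X) : polarForm p x (I • y) = I * polarForm p x y := by
  rw [polarForm_eq_polarRe, polarForm_eq_polarRe, smul_smul, I_mul_I, neg_one_smul,
    polarRe_neg_right]
  push_cast
  ring_nf
  rw [I_sq]
  ring

theorem polarForm_ofReal_smul_right
    (hpar : ∀ x y : X, p (x + y) ^ 2 + p (x - y) ^ 2 = 2 * (p x ^ 2 + p y ^ 2))
    (hcont : ∀ x y : X, Tendsto (fun t : ℝ => p (x + t • y)) (𝓝[>] 0) (𝓝 (p x)))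
    (t : ℝ) (x y : X) : polarForm p x ((t : ℂ) • y) = t * polarForm p x y := by
  rw [polarForm_eq_polarRe, polarForm_eq_polarRe, smul_comm I, coe_smul, coe_smul,
    polarRe_smul_right hpar hcont, polarRe_smul_right hpar hcont]
  push_cast
  ring

theorem polarForm_smul_right
    (hpar : ∀ x y : X, p (x + y) ^ 2 + p (x - y) ^ 2 = 2 * (p x ^ 2 + p y ^ 2))
    (hcont : ∀ x y : X, Tendsto (fun t : ℝ => p (x + t • y)) (𝓝[>] 0) (𝓝 (p x)))
    (l : ℂ) (x y : X) : polarForm p x (l • y) = l * polarForm p x y := by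
  have hl : l • y = (l.re : ℂ) • y + (l.im : ℂ) • (I • y) := by
    rw [smul_smul, ← add_smul, re_add_im]
  rw [hl, polarForm_add_right hpar, polarForm_ofReal_smul_right hpar hcont,
    polarForm_ofReal_smul_right hpar hcont, polarForm_I_smul_right]
  conv_rhs => rw [← re_add_im l]
  ring

theorem eq_sum_polarization_of_hermitian {B : X → X → ℂ}
    (hconj : ∀ x y, B x y = conj (B y x)) (hadd : ∀ x y z, B x (y + z) = B x y + B x z)
    (hsmul : ∀ (l : ℂ) (x y), B x (l • y) = l * B x y) (x y : X) :
    B x y = (1 / 4 : ℂ) * ∑ k ∈ Finset.range 4,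
      (-I) ^ k * B (x + I ^ k • y) (x + I ^ k • y) := by
  have hadd_left : ∀ u v w, B (u + v) w = B u w + B v w := fun u v w => by
    rw [hconj, hadd, map_add, ← hconj, ← hconj]
  have hexpand : ∀ c : ℂ, B (x + c • y) (x + c • y)
      = B x x + c * B x y + conj c * conj (B x y) + c * conj c * B y y := fun c => by
    rw [hadd, hadd_left, hadd_left, hsmul, hsmul, hconj (c • y), hsmul, hconj (c • y), hsmul,
      map_mul, map_mul, ← hconj y y]
    ring
  have hnegI3 : (-I) ^ 3 = I := by rw [neg_pow, I_pow_three]; ring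
  simp only [Finset.sum_range_succ, Finset.sum_range_zero, hexpand, map_pow, conj_I, pow_zero,
    pow_one, neg_sq, I_sq, I_pow_three, hnegI3]
  ring_nf
  rw [I_sq]
  ring

end Complex

/-- **A parallelogram law with directional continuity yields a seminorm and a semi-inner
product.** If `p : X → [0,∞)` is absolutely homogeneous, satisfies the parallelogram law and is
directionally continuous, then `p` is subadditive (hence a seminorm) and the polarization
formula defines the unique positive semidefinite Hermitian sesquilinear form `B` with
`B(x,x) = p(x)²`. -/
theorem seminorm_and_semi_inner_product_of_parallelogram
    {X : Type*} [AddCommGroup X] [Module ℂ X]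
    (p : X → ℝ) (hp0 : ∀ x, 0 ≤ p x)
    (hhom : ∀ (z : ℂ) (x : X), p (z • x) = ‖z‖ * p x)
    (hpar : ∀ x y : X, p (x + y) ^ 2 + p (x - y) ^ 2 = 2 * (p x ^ 2 + p y ^ 2))
    (hcont : ∀ x y : X, Filter.Tendsto (fun t : ℝ => p (x + (t : ℂ) • y))
      (nhdsWithin 0 (Set.Ioi 0)) (nhds (p x))) :
    (∀ x y : X, p (x + y) ≤ p x + p y) ∧
    (∀ x : X, polarForm p x x = (p x : ℂ) ^ 2) ∧
    (∀ x y : X, polarForm p x y = starRingEnd ℂ (polarForm p y x)) ∧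
    (∀ x y z : X, polarForm p x (y + z) = polarForm p x y + polarForm p x z) ∧
    (∀ (l : ℂ) (x y : X), polarForm p x (l • y) = l * polarForm p x y) ∧
    (∀ B' : X → X → ℂ,
      (∀ x, B' x x = (p x : ℂ) ^ 2) →
      (∀ x y, B' x y = starRingEnd ℂ (B' y x)) →
      (∀ x y z, B' x (y + z) = B' x y + B' x z) →
      (∀ (l : ℂ) (x y), B' x (l • y) = l * B' x y) →
      B' = polarForm p) := by
  have hneg : ∀ x : X, p (-x) = p x := fun x => by simpa using hhom (-1) x
  have hI : ∀ x : X, p (I • x) = p x := fun x => by simpa using hhom I x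
  have hhom_real : ∀ (t : ℝ) (x : X), p (t • x) = |t| * p x := fun t x => by
    rw [← coe_smul, hhom, norm_real, Real.norm_eq_abs]
  have hcont_real : ∀ x y : X, Tendsto (fun t : ℝ => p (x + t • y)) (𝓝[>] 0) (𝓝 (p x)) := by
    simpa only [coe_smul] using hcont
  refine ⟨add_le_of_parallelogram hp0 hhom_real hpar hcont_real, polarForm_self hhom,
    polarForm_conj hneg hI, polarForm_add_right hpar, polarForm_smul_right hpar hcont_real, ?_⟩
  intro B hself hconj hadd hsmul
  funext x y
  rw [eq_sum_polarization_of_hermitian hconj hadd hsmul, polarForm]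
  simp only [hself]
end

section
/- Deficiency spaces for the momentum operator on the box [0,1]. Let 𝒮 be the set of smooth functions f : ℝ → ℂ such that all iterated derivatives of f (including f itself) vanish at 0 and at 1, and let 𝒞 be the set of smooth functions f : ℝ → ℂ with compact support contained in the open interval (0,1). Let D be any set of functions with 𝒞 ⊆ D ⊆ 𝒮. Then for each choice of sign ∓: a square-integrable function g on (0,1) satisfies ∫₀¹ conj(g(x))·(f′(x) ∓ f(x)) dx = 0 for every f ∈ D if and only if there exists c ∈ ℂ such that g(x) = c·e^{∓x} for almost every x ∈ (0,1). -/
/-!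
With the integrating factor `e^{σx}`, the condition on `g` says that `u = e^{σx} conj g` satisfies
`∫ u ψ' = 0` for every test function `ψ` on `(0,1)`: indeed `f = e^{σx} ψ` lies in `𝒞` and
`f' - σ f = e^{σx} ψ'`. By the du Bois-Reymond lemma `u` is then a.e. constant: subtracting from a
test function `φ` the multiple `(∫ φ) ρ` of a fixed bump `ρ` with `∫ ρ = 1` leaves a function of
integral zero, which is the derivative of a test function, so `∫ φ (u - ∫ ρ u) = 0` for all `φ`.
Conversely `e^{-σx} (f' - σ f) = (e^{-σx} f)'` integrates to zero because `f(0) = f(1) = 0`.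
-/

open MeasureTheory

/-- The space `𝒮` of smooth functions on `ℝ` all of whose iterated derivatives (including the
function itself) vanish at `0` and at `1`. -/
def SpaceS : Set (ℝ → ℂ) :=
  {f | ContDiff ℝ (⊤ : ℕ∞) f ∧ ∀ n : ℕ, iteratedDeriv n f 0 = 0 ∧ iteratedDeriv n f 1 = 0}

/-- The space `𝒞` of smooth functions on `ℝ` with compact support contained in `(0,1)`. -/
def SpaceC : Set (ℝ → ℂ) :=
  {f | ContDiff ℝ (⊤ : ℕ∞) f ∧ HasCompactSupport f ∧ tsupport f ⊆ Set.Ioo 0 1}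

open Set ComplexConjugate
open scoped ContDiff

lemma IsCompact.exists_subset_Icc_of_subset_Ioo {K : Set ℝ} {a b : ℝ} (hK : IsCompact K)
    (hKab : K ⊆ Ioo a b) : ∃ c d, a < c ∧ d < b ∧ K ⊆ Icc c d := by
  rcases K.eq_empty_or_nonempty with rfl | hne
  · exact ⟨a + 1, b - 1, by linarith, by linarith, empty_subset _⟩
  obtain ⟨c, hcK, hc⟩ := hK.exists_isLeast hne
  obtain ⟨d, hdK, hd⟩ := hK.exists_isGreatest hne
  exact ⟨c, d, (hKab hcK).1, (hKab hdK).2, fun x hx => ⟨hc hx, hd hx⟩⟩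

section DuBoisReymond

variable {E : Type*} [NormedAddCommGroup E] [NormedSpace ℝ E] {a b : ℝ}

lemma exists_contDiff_deriv_eq_of_integral_eq_zero {θ : ℝ → ℝ} (hθ : ContDiff ℝ ∞ θ)
    (hθc : HasCompactSupport θ) (hθs : tsupport θ ⊆ Ioo a b) (hθ0 : ∫ x, θ x = 0) :
    ∃ ψ : ℝ → ℝ, ContDiff ℝ ∞ ψ ∧ HasCompactSupport ψ ∧ tsupport ψ ⊆ Ioo a b ∧ deriv ψ = θ := by
  obtain ⟨c, d, hac, hdb, hcd⟩ := IsCompact.exists_subset_Icc_of_subset_Ioo hθc hθs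
  have hθ_out : ∀ t ∉ Icc c d, θ t = 0 := fun t ht =>
    image_eq_zero_of_notMem_tsupport fun h => ht (hcd h)
  set ψ : ℝ → ℝ := fun x => ∫ t in a..x, θ t
  have hψθ : ∀ x, HasDerivAt ψ (θ x) x := fun x =>
    (hθ.continuous.integral_hasStrictDerivAt a x).hasDerivAt
  have hψ' : deriv ψ = θ := funext fun x => (hψθ x).deriv
  have hψ_supp : Function.support ψ ⊆ Icc c d := by
    intro x hx
    by_contra hxcd
    apply hx
    change (∫ t in a..x, θ t) = 0
    by_cases hxc : x < c
    · refine (intervalIntegral.integral_congr (g := 0) fun t ht => hθ_out t fun htcd => ?_).trans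
        intervalIntegral.integral_zero
      rcases Set.mem_uIcc.mp ht with ⟨-, htx⟩ | ⟨-, hta⟩
      · exact hxc.not_ge (htcd.1.trans htx)
      · exact hac.not_ge (htcd.1.trans hta)
    · have hdx : d < x := lt_of_not_ge fun hxd => hxcd ⟨le_of_not_gt hxc, hxd⟩
      rw [intervalIntegral.integral_of_le (hac.trans_le (le_of_not_gt hxc)).le, ← hθ0]
      refine setIntegral_eq_integral_of_forall_compl_eq_zero fun t ht => hθ_out t fun htcd => ?_
      exact ht ⟨hac.trans_le htcd.1, htcd.2.trans hdx.le⟩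
  refine ⟨ψ, contDiff_infty_iff_deriv.mpr ⟨fun x => (hψθ x).differentiableAt, hψ' ▸ hθ⟩,
    HasCompactSupport.of_support_subset_isCompact isCompact_Icc hψ_supp,
    (closure_minimal hψ_supp isClosed_Icc).trans (Icc_subset_Ioo hac hdb), hψ'⟩

lemma exists_contDiff_tsupport_subset_Ioo_integral_eq_one (hab : a < b) :
    ∃ ρ : ℝ → ℝ, ContDiff ℝ ∞ ρ ∧ HasCompactSupport ρ ∧ tsupport ρ ⊆ Ioo a b ∧ ∫ x, ρ x = 1 := by
  let ρ : ContDiffBump ((a + b) / 2) := ⟨(b - a) / 8, (b - a) / 4, by linarith, by linarith⟩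
  refine ⟨ρ.normed volume, ρ.contDiff_normed, ρ.hasCompactSupport_normed, ?_, ρ.integral_normed⟩
  rw [ρ.tsupport_normed_eq, Real.closedBall_eq_Icc]
  exact Icc_subset_Ioo (by dsimp only [ρ]; linarith) (by dsimp only [ρ]; linarith)

lemma IntegrableOn.continuous_smul_Ioo {f : ℝ → ℝ} (hf : Continuous f) {u : ℝ → E}
    (hu : IntegrableOn u (Ioo a b)) : IntegrableOn (fun x => f x • u x) (Ioo a b) :=
  hu.continuousOn_smul_of_subset hf.continuousOn isCompact_Icc measurableSet_Ioo Ioo_subset_Icc_self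

theorem ae_eq_const_of_integral_deriv_smul_eq_zero [CompleteSpace E] (hab : a < b) {u : ℝ → E}
    (hu : IntegrableOn u (Ioo a b))
    (h : ∀ ψ : ℝ → ℝ, ContDiff ℝ ∞ ψ → HasCompactSupport ψ → tsupport ψ ⊆ Ioo a b →
      ∫ x in Ioo a b, deriv ψ x • u x = 0) :
    ∃ k : E, ∀ᵐ x ∂volume.restrict (Ioo a b), u x = k := by
  obtain ⟨ρ, hρ, hρc, hρs, hρ1⟩ := exists_contDiff_tsupport_subset_Ioo_integral_eq_one hab
  set k := ∫ x in Ioo a b, ρ x • u x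
  have key : ∀ φ : ℝ → ℝ, ContDiff ℝ ∞ φ → HasCompactSupport φ → tsupport φ ⊆ Ioo a b →
      ∫ x in Ioo a b, φ x • (u x - k) = 0 := by
    intro φ hφ hφc hφs
    set I := ∫ x, φ x
    have hφI : ∫ x in Ioo a b, φ x = I :=
      setIntegral_eq_integral_of_forall_compl_eq_zero fun x hx =>
        image_eq_zero_of_notMem_tsupport fun h => hx (hφs h)
    have hθ0 : ∫ x, (φ x - I * ρ x) = 0 := by
      rw [integral_sub (hφ.continuous.integrable_of_hasCompactSupport hφc)
        ((hρ.continuous.integrable_of_hasCompactSupport hρc).const_mul I), integral_const_mul,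
        hρ1, mul_one, sub_self]
    obtain ⟨ψ, hψ, hψc, hψs, hψ'⟩ := exists_contDiff_deriv_eq_of_integral_eq_zero
      (hφ.sub (contDiff_const.mul hρ)) (hφc.sub hρc.mul_left)
      ((tsupport_sub _ _).trans (union_subset hφs (tsupport_mul_subset_right.trans hρs))) hθ0
    have hφu := IntegrableOn.continuous_smul_Ioo hφ.continuous hu
    have hρu : IntegrableOn (fun x => I • ρ x • u x) (Ioo a b) :=
      (IntegrableOn.continuous_smul_Ioo hρ.continuous hu).smul I
    have hφk : IntegrableOn (fun x => φ x • k) (Ioo a b) :=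
      IntegrableOn.continuous_smul_Ioo hφ.continuous (integrableOn_const measure_Ioo_lt_top.ne)
    have hψu := h ψ hψ hψc hψs
    simp only [hψ', sub_smul, mul_smul] at hψu
    rw [integral_sub hφu hρu, integral_smul] at hψu
    simp only [smul_sub]
    rwa [integral_sub hφu hφk, integral_smul_const, hφI]
  have hae := isOpen_Ioo.ae_eq_zero_of_integral_contDiff_smul_eq_zero
    (f := fun x => u x - k) (μ := volume.restrict (Ioo a b))
    (Integrable.integrableOn (hu.sub (integrableOn_const measure_Ioo_lt_top.ne))).locallyIntegrableOn
    key
  refine ⟨k, ?_⟩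
  filter_upwards [hae, ae_restrict_mem measurableSet_Ioo] with x hx hxm
  exact sub_eq_zero.mp (hx hxm)

end DuBoisReymond

lemma HasDerivAt.cexp_mul_ofReal_mul {f : ℝ → ℂ} {f' : ℂ} {x : ℝ} (τ : ℂ)
    (hf : HasDerivAt f f' x) :
    HasDerivAt (fun x : ℝ => Complex.exp (τ * x) * f x)
      (Complex.exp (τ * x) * (f' + τ * f x)) x := by
  have hτx : HasDerivAt (fun x : ℝ => τ * x) τ x := by
    simpa using (Complex.ofRealCLM.hasDerivAt (x := x)).const_mul τ
  exact (hτx.cexp.mul hf).congr_deriv (by ring)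

lemma integral_cexp_mul_deriv_add_mul {f : ℝ → ℂ} (hf : ContDiff ℝ 1 f) (τ : ℂ) (a b : ℝ) :
    ∫ x in a..b, Complex.exp (τ * x) * (deriv f x + τ * f x) =
      Complex.exp (τ * b) * f b - Complex.exp (τ * a) * f a := by
  have hf' : ∀ x, HasDerivAt f (deriv f x) x := fun x =>
    (hf.differentiable one_ne_zero x).hasDerivAt
  refine intervalIntegral.integral_eq_sub_of_hasDerivAt
    (fun x _ => (hf' x).cexp_mul_ofReal_mul τ) (Continuous.intervalIntegrable ?_ a b)
  exact (Complex.continuous_exp.comp (continuous_const.mul Complex.continuous_ofReal)).mul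
    ((hf.continuous_deriv le_rfl).add (continuous_const.mul hf.continuous))

lemma cexp_mul_ofReal_mem_spaceC (τ : ℂ) {ψ : ℝ → ℝ} (hψ : ContDiff ℝ ∞ ψ)
    (hψc : HasCompactSupport ψ) (hψs : tsupport ψ ⊆ Ioo 0 1) :
    (fun x : ℝ => Complex.exp (τ * x) * ψ x) ∈ SpaceC :=
  ⟨(Complex.contDiff_exp.comp (contDiff_const.mul Complex.ofRealCLM.contDiff)).mul
      (Complex.ofRealCLM.contDiff.comp hψ),
    (hψc.comp_left Complex.ofReal_zero).mul_left,
    tsupport_mul_subset_right.trans ((tsupport_comp_subset Complex.ofReal_zero ψ).trans hψs)⟩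

lemma integral_cexp_neg_mul_deriv_sub_mul_eq_zero {f : ℝ → ℂ} (hf : f ∈ SpaceS) (σ : ℂ) :
    ∫ x in Ioo (0 : ℝ) 1, Complex.exp (-σ * x) * (deriv f x - σ * f x) = 0 := by
  obtain ⟨hf0, hf1⟩ : f 0 = 0 ∧ f 1 = 0 := by simpa using hf.2 0
  simp_rw [sub_eq_add_neg, ← neg_mul]
  rw [← integral_Ioc_eq_integral_Ioo, ← intervalIntegral.integral_of_le zero_le_one,
    integral_cexp_mul_deriv_add_mul (hf.1.of_le (by simp)), hf0, hf1]
  simp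

theorem deficiency_spaces_momentum_box_general
    (D : Set (ℝ → ℂ)) (hCD : SpaceC ⊆ D) (hDS : D ⊆ SpaceS)
    (σ : ℝ)
    (g : ℝ → ℂ) (hg : MemLp g 2 (volume.restrict (Set.Ioo (0 : ℝ) 1))) :
    (∀ f ∈ D,
        ∫ x in Set.Ioo (0 : ℝ) 1, (starRingEnd ℂ) (g x) * (deriv f x - (σ : ℂ) * f x) = 0) ↔
      ∃ c : ℂ, ∀ᵐ x ∂(volume.restrict (Set.Ioo (0 : ℝ) 1)),
        g x = c * Complex.exp (-(σ : ℂ) * (x : ℂ)) := by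
  constructor
  · intro h
    set u : ℝ → ℂ := fun x => Complex.exp (σ * x) * conj (g x)
    have hu : IntegrableOn u (Ioo 0 1) :=
      IntegrableOn.continuousOn_mul_of_subset (by fun_prop) (hg.star.integrable one_le_two)
        isCompact_Icc measurableSet_Ioo Ioo_subset_Icc_self
    have hu_deriv : ∀ ψ : ℝ → ℝ, ContDiff ℝ ∞ ψ → HasCompactSupport ψ → tsupport ψ ⊆ Ioo 0 1 →
        ∫ x in Ioo 0 1, deriv ψ x • u x = 0 := by
      intro ψ hψ hψc hψs
      rw [← h _ (hCD (cexp_mul_ofReal_mem_spaceC σ hψ hψc hψs))]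
      refine setIntegral_congr_fun measurableSet_Ioo fun x _ => ?_
      rw [(((hψ.differentiable (by simp) x).hasDerivAt.ofReal_comp).cexp_mul_ofReal_mul σ).deriv,
        Complex.real_smul]
      ring
    obtain ⟨k, hk⟩ := ae_eq_const_of_integral_deriv_smul_eq_zero zero_lt_one hu hu_deriv
    refine ⟨conj k, ?_⟩
    filter_upwards [hk] with x hx
    calc g x = conj (Complex.exp (σ * x) * conj (g x)) * Complex.exp (-σ * x) := by
          rw [map_mul, Complex.conj_conj, mul_right_comm, ← Complex.exp_conj, ← Complex.exp_add]
          simp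
      _ = conj k * Complex.exp (-σ * x) := by rw [← hx]
  · rintro ⟨c, hc⟩ f hf
    calc ∫ x in Ioo (0 : ℝ) 1, conj (g x) * (deriv f x - σ * f x)
        = ∫ x in Ioo (0 : ℝ) 1, conj c * (Complex.exp (-σ * x) * (deriv f x - σ * f x)) := by
          refine integral_congr_ae ?_
          filter_upwards [hc] with x hx
          rw [hx, map_mul, ← Complex.exp_conj, mul_assoc]
          simp
      _ = 0 := by
          rw [integral_const_mul, integral_cexp_neg_mul_deriv_sub_mul_eq_zero (hDS hf), mul_zero]

/-- **Deficiency spaces for the momentum operator on the box `[0,1]`.**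
For any domain `D` with `𝒞 ⊆ D ⊆ 𝒮` and either sign `σ = ±1`, a square-integrable `g` on
`(0,1)` satisfies `∫₀¹ conj(g)·(f′ − σ f) = 0` for all `f ∈ D` iff `g = c·e^{−σx}` a.e. for
some `c ∈ ℂ`. -/
theorem deficiency_spaces_momentum_box
    (D : Set (ℝ → ℂ)) (hCD : SpaceC ⊆ D) (hDS : D ⊆ SpaceS)
    (σ : ℝ) (hσ : σ = 1 ∨ σ = -1)
    (g : ℝ → ℂ) (hg : MemLp g 2 (volume.restrict (Set.Ioo (0 : ℝ) 1))) :
    (∀ f ∈ D,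
        ∫ x in Set.Ioo (0 : ℝ) 1, (starRingEnd ℂ) (g x) * (deriv f x - (σ : ℂ) * f x) = 0) ↔
      ∃ c : ℂ, ∀ᵐ x ∂(volume.restrict (Set.Ioo (0 : ℝ) 1)),
        g x = c * Complex.exp (-(σ : ℂ) * (x : ℂ)) :=
  deficiency_spaces_momentum_box_general D hCD hDS σ g hg
end
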